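/- arXiv:1603.04279 — 7 statements merged into one kernel-verified Lean document; each statement's English description precedes it below -/
import Mathlib

section
/- Let ‖·‖ be a norm on ℂⁿ, P an m-homogeneous polynomial on ℂⁿ, and L a symmetric m-linear form with L(x,...,x) = P(x) for all x. Then sup over ‖x⁽ᵏ⁾‖ ≤ 1 of |L(x⁽¹⁾,...,x⁽ᵐ⁾)| ≤ e^m · sup over ‖x‖ ≤ 1 of |P(x)|. -/
open Finset Function Module

/-!
Polarization with signs: expanding `L (∑ εᵢ xᵢ, …, ∑ εᵢ xᵢ)` by multilinearity and averaging
against `∏ εᵢ` over all `ε ∈ {±1}ᵐ` kills every term `L (x_{r 1}, …, x_{r m})` with `r` not a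
permutation, so `∑_ε (∏ εᵢ) P (∑ εᵢ xᵢ) = 2ᵐ m! L x`. Each `∑ εᵢ xᵢ` has norm at most `m`, hence
by homogeneity `|P (∑ εᵢ xᵢ)| ≤ mᵐ sup_{‖y‖ ≤ 1} |P y|`, and `mᵐ / m! ≤ eᵐ`. The supremum is
finite because the unit ball of a norm on `ℂⁿ` is compact.
-/

section Signs

variable {ι : Type*} [Fintype ι] [DecidableEq ι]

theorem sum_prod_units_mul_comp_of_bijective {r : ι → ι} (hr : Bijective r) :
    ∑ ε : ι → ℤˣ, ((∏ i, ε i * ε (r i) : ℤˣ) : ℤ) = 2 ^ Fintype.card ι := by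
  have h (ε : ι → ℤˣ) : ∏ i, ε i * ε (r i) = 1 := by
    rw [prod_mul_distrib, Fintype.prod_bijective r hr _ ε fun _ => rfl, Int.units_mul_self]
  simp [h]

theorem sum_prod_units_mul_comp_of_not_surjective {r : ι → ι} (hr : ¬ Surjective r) :
    ∑ ε : ι → ℤˣ, ((∏ i, ε i * ε (r i) : ℤˣ) : ℤ) = 0 := by
  obtain ⟨j, hj⟩ : ∃ j, ∀ i, r i ≠ j := by simpa [Surjective] using hr
  set flip : ι → ℤˣ := Pi.mulSingle j (-1)
  have hflip (ε : ι → ℤˣ) :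
      ∏ i, (flip * ε) i * (flip * ε) (r i) = -∏ i, ε i * ε (r i) := by
    calc ∏ i, (flip * ε) i * (flip * ε) (r i) = ∏ i, flip i * (ε i * ε (r i)) :=
          prod_congr rfl fun i _ => by simp [flip, hj i, mul_assoc]
      _ = -∏ i, ε i * ε (r i) := by simp [prod_mul_distrib, flip]
  have := Equiv.sum_comp (Equiv.mulLeft flip) fun ε : ι → ℤˣ => ((∏ i, ε i * ε (r i) : ℤˣ) : ℤ)
  simp only [Equiv.coe_mulLeft, hflip, Units.val_neg, sum_neg_distrib] at this
  omega

end Signs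

namespace MultilinearMap

theorem map_sum_smul {R ι κ M N : Type*} [CommSemiring R] [Fintype ι] [DecidableEq ι]
    [Fintype κ] [AddCommMonoid M] [Module R M] [AddCommMonoid N] [Module R N]
    (L : MultilinearMap R (fun _ : ι => M) N) (c : ι → κ → R) (x : κ → M) :
    L (fun i => ∑ j, c i j • x j) = ∑ r : ι → κ, (∏ i, c i (r i)) • L (fun i => x (r i)) := by
  rw [L.map_sum fun i j => c i j • x j]
  exact sum_congr rfl fun r _ => L.map_smul_univ _ _

theorem continuous_of_finiteDimensional {𝕜 ι E F : Type*}
    [NontriviallyNormedField 𝕜] [CompleteSpace 𝕜] [Fintype ι]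
    [AddCommGroup E] [Module 𝕜 E] [TopologicalSpace E] [IsTopologicalAddGroup E]
    [ContinuousSMul 𝕜 E] [T2Space E] [FiniteDimensional 𝕜 E]
    [AddCommGroup F] [Module 𝕜 F] [TopologicalSpace F] [ContinuousAdd F] [ContinuousSMul 𝕜 F]
    (L : MultilinearMap 𝕜 (fun _ : ι => E) F) : Continuous L := by
  classical
  let b := Module.finBasis 𝕜 E
  have expand (x : ι → E) : L x = ∑ r : ι → Fin (finrank 𝕜 E),
      (∏ i, b.coord (r i) (x i)) • L (fun i => b (r i)) := by
    conv_lhs => rw [← funext fun i => b.sum_repr (x i)]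
    exact L.map_sum_smul (fun i j => b.repr (x i) j) b
  rw [funext expand]
  refine continuous_finsetSum _ fun r _ => (continuous_finsetProd _ fun i _ => ?_).smul
    continuous_const
  exact (b.coord (r i)).continuous_of_finiteDimensional.comp (continuous_apply i)

variable {ι : Type*} [Fintype ι]

theorem sum_units_smul_map_diag_sum [DecidableEq ι] {R M N : Type*} [CommRing R] [AddCommGroup M]
    [Module R M] [AddCommGroup N] [Module R N] (L : MultilinearMap R (fun _ : ι => M) N)
    (hsym : ∀ (σ : Equiv.Perm ι) (x : ι → M), L (fun k => x (σ k)) = L x) (x : ι → M) :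
    ∑ ε : ι → ℤˣ, (∏ i, ε i) • L (fun _ => ∑ i, ε i • x i)
      = (2 ^ Fintype.card ι * (Fintype.card ι).factorial) • L x := by
  have expand (ε : ι → ℤˣ) : L (fun _ => ∑ i, ε i • x i)
      = ∑ r : ι → ι, ((∏ i, ε (r i) : ℤˣ) : ℤ) • L (fun i => x (r i)) := by
    simpa [Units.smul_def] using
      (L.restrictScalars ℤ).map_sum_smul (fun _ j => (ε j : ℤ)) x
  calc ∑ ε : ι → ℤˣ, (∏ i, ε i) • L (fun _ => ∑ i, ε i • x i)
      = ∑ r : ι → ι, (∑ ε : ι → ℤˣ, ((∏ i, ε i * ε (r i) : ℤˣ) : ℤ)) • L (fun i => x (r i)) := by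
        simp_rw [expand, smul_sum, Units.smul_def, smul_smul, ← Units.val_mul,
          ← prod_mul_distrib]
        rw [sum_comm]
        simp_rw [sum_smul]
    _ = ∑ σ : Equiv.Perm ι, ((2 ^ Fintype.card ι : ℕ) : ℤ) • L (fun i => x (σ i)) := by
        refine (Fintype.sum_of_injective (fun σ : Equiv.Perm ι => (σ : ι → ι))
          DFunLike.coe_injective _ _ (fun r hr => ?_) fun σ => ?_).symm
        · rw [sum_prod_units_mul_comp_of_not_surjective, zero_smul]
          exact fun hsurj => hr ⟨Equiv.ofBijective r (Finite.surjective_iff_bijective.mp hsurj), rfl⟩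
        · rw [sum_prod_units_mul_comp_of_bijective σ.bijective, Nat.cast_pow, Nat.cast_ofNat]
    _ = (2 ^ Fintype.card ι * (Fintype.card ι).factorial) • L x := by
        simp only [hsym, sum_const, card_univ, Fintype.card_perm]
        rw [natCast_zsmul, mul_nsmul]

variable {𝕜 E F : Type*} [RCLike 𝕜] [AddCommGroup E] [Module 𝕜 E] [NormedAddCommGroup F]
  [NormedSpace 𝕜 F] (p : Seminorm 𝕜 E) (L : MultilinearMap 𝕜 (fun _ : ι => E) F) {S : ℝ}

theorem norm_map_diag_le_seminorm_pow_mul (hS : ∀ y, p y ≤ 1 → ‖L (fun _ => y)‖ ≤ S) (y : E) :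
    ‖L (fun _ => y)‖ ≤ p y ^ Fintype.card ι * S := by
  -- Scale by every `s > p y` rather than by `p y`, which may vanish, and let `s ↓ p y`.
  have scaled (s : ℝ) (hs : p y < s) : ‖L (fun _ => y)‖ ≤ s ^ Fintype.card ι * S := by
    have hs0 : 0 < s := (apply_nonneg p y).trans_lt hs
    have hns : ‖(s : 𝕜)‖ = s := by rw [RCLike.norm_ofReal, abs_of_pos hs0]
    have hy : (fun _ : ι => y) = fun _ => (s : 𝕜) • ((s : 𝕜)⁻¹ • y) := by
      rw [smul_inv_smul₀ (RCLike.ofReal_ne_zero.mpr hs0.ne')]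
    rw [hy, L.map_smul_univ, prod_const, card_univ, norm_smul, norm_pow, hns]
    gcongr
    refine hS _ ?_
    rw [map_smul_eq_mul, norm_inv, hns]
    exact inv_mul_le_one_of_le₀ hs.le hs0.le
  exact ge_of_tendsto (((continuous_pow _).mul continuous_const).continuousWithinAt
    (s := Set.Ioi (p y)) (x := p y)) (eventually_nhdsWithin_of_forall scaled)

theorem norm_le_pow_div_factorial_mul [DecidableEq ι]
    (hsym : ∀ (σ : Equiv.Perm ι) (x : ι → E), L (fun k => x (σ k)) = L x)
    (hS : ∀ y, p y ≤ 1 → ‖L (fun _ => y)‖ ≤ S) (x : ι → E) (hx : ∀ i, p (x i) ≤ 1) :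
    ‖L x‖ ≤ Fintype.card ι ^ Fintype.card ι / (Fintype.card ι).factorial * S := by
  set m := Fintype.card ι
  have hS0 : 0 ≤ S := (norm_nonneg _).trans (hS 0 (by simp))
  have hsum (ε : ι → ℤˣ) : p (∑ i, ε i • x i) ≤ m := by
    have hsign (i : ι) : p (ε i • x i) = p (x i) := by
      rcases Int.units_eq_one_or (ε i) with h | h <;> simp [h]
    calc p (∑ i, ε i • x i) ≤ ∑ i, p (ε i • x i) :=
          le_sum_of_subadditive p (by simp) (map_add_le_add p) _ _
      _ ≤ ∑ _i : ι, (1 : ℝ) := sum_le_sum fun i _ => (hsign i).trans_le (hx i)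
      _ = m := by simp [m]
  have hbound : (2 ^ m * m.factorial : ℕ) * ‖L x‖ ≤ (2 ^ m : ℕ) * (m ^ m * S) :=
    calc (2 ^ m * m.factorial : ℕ) * ‖L x‖ = ‖(2 ^ m * m.factorial) • L x‖ := by
          rw [RCLike.norm_nsmul 𝕜, nsmul_eq_mul]
      _ = ‖∑ ε : ι → ℤˣ, (∏ i, ε i) • L (fun _ => ∑ i, ε i • x i)‖ := by
          rw [L.sum_units_smul_map_diag_sum hsym]
      _ ≤ ∑ ε : ι → ℤˣ, ‖L (fun _ => ∑ i, ε i • x i)‖ :=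
          norm_sum_le_of_le _ fun ε _ => (norm_units_zsmul _ _).le
      _ ≤ ∑ _ε : ι → ℤˣ, m ^ m * S := sum_le_sum fun ε _ =>
          (L.norm_map_diag_le_seminorm_pow_mul p hS _).trans (by gcongr; exact hsum ε)
      _ = (2 ^ m : ℕ) * (m ^ m * S) := by simp [m]
  rw [div_mul_eq_mul_div, le_div_iff₀ (by positivity)]
  push_cast at hbound
  nlinarith [pow_pos (two_pos (α := ℝ)) m]

end MultilinearMap

theorem Seminorm.continuous_of_finiteDimensional {𝕜 E : Type*} [RCLike 𝕜] [NormedAddCommGroup E]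
    [NormedSpace ℝ E] [FiniteDimensional ℝ E] [Module 𝕜 E] [IsScalarTower ℝ 𝕜 E]
    (p : Seminorm 𝕜 E) : Continuous p :=
  p.convexOn.locallyLipschitz.continuous

theorem Seminorm.isCompact_setOf_le_one {𝕜 E : Type*} [RCLike 𝕜] [NormedAddCommGroup E]
    [NormedSpace 𝕜 E] [ProperSpace E] (p : Seminorm 𝕜 E) (hp : Continuous p)
    (hdef : ∀ x, p x = 0 → x = 0) : IsCompact {x | p x ≤ 1} := by
  refine Metric.isCompact_of_isClosed_isBounded (isClosed_le hp continuous_const) ?_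
  rcases subsingleton_or_nontrivial E with _ | _
  · exact Bornology.IsBounded.all _
  obtain ⟨y, hy, hmin⟩ := (isCompact_sphere (0 : E) 1).exists_isMinOn
    (Set.nonempty_coe_sort.mp (NormedSpace.sphere_nonempty_rclike 𝕜 zero_le_one)) hp.continuousOn
  have hc : 0 < p y := (apply_nonneg p y).lt_of_ne fun h => by simp [hdef y h.symm] at hy
  refine (Metric.isBounded_closedBall (x := 0) (r := (p y)⁻¹)).subset fun x (hx : p x ≤ 1) => ?_
  rcases eq_or_ne x 0 with rfl | hx0
  · simp [hc.le]
  have hscaled : p y ≤ ‖x‖⁻¹ * p x := by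
    simpa [map_smul_eq_mul, mem_sphere_zero_iff_norm, norm_smul_inv_norm hx0] using
      hmin (mem_sphere_zero_iff_norm.mpr (norm_smul_inv_norm (𝕜 := 𝕜) hx0))
  rw [mem_closedBall_zero_iff, le_inv_comm₀ (norm_pos_iff.mpr hx0) hc]
  exact hscaled.trans (mul_le_of_le_one_right (inv_nonneg.mpr (norm_nonneg x)) hx)

/-- Norm estimate from the polarization formula: for any norm `N` on `ℂⁿ`, an
`m`-homogeneous polynomial `P` and the symmetric `m`-linear form `L` polarizing it,
`sup_{N(x⁽ᵏ⁾)≤1} |L(x⁽¹⁾,…,x⁽ᵐ⁾)| ≤ e^m · sup_{N(x)≤1} |P(x)|`. -/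
theorem polarization_norm_estimate (n m : ℕ)
    (N : (Fin n → ℂ) → ℝ)
    (hN_tri : ∀ x y : Fin n → ℂ, N (x + y) ≤ N x + N y)
    (hN_smul : ∀ (a : ℂ) (x : Fin n → ℂ), N (a • x) = ‖a‖ * N x)
    (hN_def : ∀ x : Fin n → ℂ, N x = 0 → x = 0)
    (L : MultilinearMap ℂ (fun _ : Fin m => (Fin n → ℂ)) ℂ)
    (hsym : ∀ (σ : Equiv.Perm (Fin m)) (x : Fin m → (Fin n → ℂ)),
      L (fun k => x (σ k)) = L x)
    (P : (Fin n → ℂ) → ℂ)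
    (hP : ∀ x : Fin n → ℂ, P x = L (fun _ => x))
    (x : Fin m → (Fin n → ℂ)) (hx : ∀ k, N (x k) ≤ 1) :
    ‖L x‖ ≤ Real.exp m * ⨆ y : {y : Fin n → ℂ // N y ≤ 1}, ‖P y.1‖ := by
  let p : Seminorm ℂ (Fin n → ℂ) := Seminorm.of N hN_tri hN_smul
  have hP_cont : Continuous P := by
    rw [funext hP]
    exact L.continuous_of_finiteDimensional.comp (continuous_pi fun _ => continuous_id)
  have hbdd : BddAbove (Set.range fun y : {y // N y ≤ 1} => ‖P y.1‖) :=
    ((p.isCompact_setOf_le_one p.continuous_of_finiteDimensional hN_def).bddAbove_image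
      hP_cont.norm.continuousOn).mono
      (Set.range_subset_iff.mpr fun y => Set.mem_image_of_mem (fun y => ‖P y‖) y.2)
  set S := ⨆ y : {y : Fin n → ℂ // N y ≤ 1}, ‖P y.1‖
  have hS (y : Fin n → ℂ) (hy : p y ≤ 1) : ‖L (fun _ => y)‖ ≤ S :=
    hP y ▸ le_ciSup hbdd ⟨y, hy⟩
  have hS_nonneg : 0 ≤ S := (norm_nonneg _).trans (hS 0 (by simp))
  calc ‖L x‖ ≤ m ^ m / m.factorial * S := by
        simpa using L.norm_le_pow_div_factorial_mul p hsym hS x hx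
    _ ≤ Real.exp m * S := by
        gcongr
        exact Real.pow_div_factorial_le_exp _ (Nat.cast_nonneg m) m
end

section
/- Let P : ℂⁿ → ℂ be an m-homogeneous polynomial with non-symmetric associated m-form L_P (supported on nondecreasing indices), and let S_k L_P be the partial symmetrization over the first k arguments. Then for i ∈ {1,...,n}^m: c_i(S_k L_P) = c_{i*}(L_P)/|[(i₁,...,i_k)]| if (i_{k+1},...,i_m) is nondecreasing and max{i₁,...,i_k} ≤ i_{k+1}; otherwise c_i(S_k L_P) = 0. -/
/-- The (non-symmetric) `m`-form associated to a coefficient array `c`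
(supported on nondecreasing multi-indices):
`L_P(x⁽¹⁾,…,x⁽ᵐ⁾) = Σ_j c_j x⁽¹⁾_{j₁}⋯x⁽ᵐ⁾_{j_m}`. -/
noncomputable def LP (n m : ℕ) (c : (Fin m → Fin n) → ℂ) : (Fin m → (Fin n → ℂ)) → ℂ :=
  fun x => ∑ j : Fin m → Fin n, c j * ∏ k : Fin m, x k (j k)

/-- Partial symmetrization over the first `k` arguments:
`S_k L(x⁽¹⁾,…,x⁽ᵐ⁾) = (1/k!) Σ_{σ∈Σ_k} L(x⁽σ(1)⁾,…,x⁽σ(k)⁾,x⁽ᵏ⁺¹⁾,…,x⁽ᵐ⁾)`,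
realized as the sum over permutations of `Fin m` fixing all positions `≥ k`. -/
noncomputable def partialSym (n m k : ℕ) (L : (Fin m → (Fin n → ℂ)) → ℂ) :
    (Fin m → (Fin n → ℂ)) → ℂ :=
  fun x => (Nat.factorial k : ℂ)⁻¹ *
    ∑ σ ∈ Finset.univ.filter
        (fun σ : Equiv.Perm (Fin m) => ∀ i : Fin m, k ≤ (i : ℕ) → σ i = i),
      L (fun u => x (σ u))

/-- The coefficient `c_i(L) = L(e_{i₁},…,e_{i_m})` of an `m`-form. -/
noncomputable def coeff (n m : ℕ) (L : (Fin m → (Fin n → ℂ)) → ℂ) (i : Fin m → Fin n) : ℂ :=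
  L (fun k => Pi.single (i k) 1)

/-- The permutation-equivalence class of a multi-index. -/
def indexClass (n k : ℕ) (i : Fin k → Fin n) : Finset (Fin k → Fin n) :=
  Finset.univ.filter fun j => ∃ σ : Equiv.Perm (Fin k), j = fun u => i (σ u)

/-!
Unfolding the definitions, `c_i(S_k L_P) = (1/k!) Σ_τ c_{i ∘ τ}`, the sum running over the
permutations `τ` of the first `k` slots. As `c` is supported on nondecreasing multi-indices and
`i*` is the only nondecreasing rearrangement of `i`, each term is `c_{i*}` if `i ∘ τ` is
nondecreasing and `0` otherwise. Now `i ∘ τ` is nondecreasing iff its head `(i₁,…,i_k) ∘ τ` is and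
the tail condition on `i` holds, the latter being invariant under `τ`. The `τ` sorting the head
form a coset of the stabilizer of the head, so by orbit–stabilizer there are
`k! / |[(i₁,…,i_k)]|` of them.
-/

open Finset Equiv Nat

theorem coeff_LP (n m : ℕ) (c : (Fin m → Fin n) → ℂ) (i : Fin m → Fin n) :
    coeff n m (LP n m c) i = c i := by
  unfold coeff LP
  rw [sum_eq_single i]
  · simp
  · intro j _ hji
    obtain ⟨u, hu⟩ := Function.ne_iff.mp hji
    exact mul_eq_zero_of_right _ (prod_eq_zero (mem_univ u) (by simp [Pi.single_eq_of_ne hu]))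
  · simp

theorem coeff_partialSym_LP (n m k : ℕ) (c : (Fin m → Fin n) → ℂ) (i : Fin m → Fin n) :
    coeff n m (partialSym n m k (LP n m c)) i =
      (k ! : ℂ)⁻¹ * ∑ σ ∈ univ.filter (fun σ : Perm (Fin m) => ∀ u : Fin m, k ≤ (u : ℕ) → σ u = u),
        c (i ∘ σ) := by
  simp only [coeff, partialSym, ← coeff_LP n m c]
  rfl

section PermCastLE

variable {k m : ℕ} (hk : k ≤ m)

def permCastLEEquiv : Perm (Fin k) ≃ {σ : Perm (Fin m) // ∀ u : Fin m, k ≤ (u : ℕ) → σ u = u} :=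
  (Fin.castLEOrderIso hk).toEquiv.permCongr.trans <|
    (Perm.subtypeEquivSubtypePerm _).trans <| subtypeEquivRight fun _ => by simp only [not_lt]

theorem permCastLEEquiv_apply_castLE (τ : Perm (Fin k)) (u : Fin k) :
    (permCastLEEquiv hk τ).1 (Fin.castLE hk u) = Fin.castLE hk (τ u) :=
  Perm.ofSubtype_apply_of_mem _ (by simp)

theorem sum_perm_fixing_ge_eq_sum_permCastLEEquiv {M : Type*} [AddCommMonoid M]
    (F : Perm (Fin m) → M) :
    ∑ σ ∈ univ.filter (fun σ : Perm (Fin m) => ∀ u : Fin m, k ≤ (u : ℕ) → σ u = u), F σ =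
      ∑ τ : Perm (Fin k), F (permCastLEEquiv hk τ) := by
  rw [sum_subtype _ fun σ => mem_filter.trans (and_iff_right (mem_univ σ))]
  exact ((permCastLEEquiv hk).sum_comp fun σ => F σ).symm

end PermCastLE

section Monotonicity

variable {β : Type*} [Preorder β] {k m : ℕ}

/-- In the paper's 1-based indexing: `(g_{k+1},…,g_m)` is nondecreasing and
`max{g_1,…,g_k} ≤ g_{k+1}`. -/
def TailSortedAboveHead (k : ℕ) (g : Fin m → β) : Prop :=
  (∀ u v : Fin m, k ≤ (u : ℕ) → u ≤ v → g u ≤ g v) ∧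
    (∀ u v : Fin m, (u : ℕ) < k → (v : ℕ) = k → g u ≤ g v)

theorem monotone_iff_head_and_tailSortedAboveHead (hk : k ≤ m) (g : Fin m → β) :
    Monotone g ↔ Monotone (g ∘ Fin.castLE hk) ∧ TailSortedAboveHead k g := by
  refine ⟨fun hg => ⟨hg.comp (Fin.strictMono_castLE hk).monotone, fun u v _ huv => hg huv,
    fun u v hu hv => hg (Fin.le_def.2 (by omega))⟩, ?_⟩
  rintro ⟨hhead, htail, hbound⟩ u v huv
  by_cases hv : (v : ℕ) < k
  · exact hhead (a := ⟨u, by omega⟩) (b := ⟨v, hv⟩) huv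
  by_cases hu : (u : ℕ) < k
  · have hkm : k < m := by omega
    exact (hbound u ⟨k, hkm⟩ hu rfl).trans (htail _ v le_rfl (Fin.le_def.2 (not_lt.1 hv)))
  · exact htail u v (by omega) huv

theorem apply_lt_iff_of_fixes_ge {σ : Perm (Fin m)} (hσ : ∀ u : Fin m, k ≤ (u : ℕ) → σ u = u)
    (u : Fin m) : (σ u : ℕ) < k ↔ (u : ℕ) < k := by
  by_cases hu : (u : ℕ) < k
  · refine iff_of_true (not_le.1 fun h => ?_) hu
    have := σ.injective (hσ (σ u) h)
    rw [this] at h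
    omega
  · rw [hσ u (not_lt.1 hu)]

theorem tailSortedAboveHead_comp_perm_iff {σ : Perm (Fin m)}
    (hσ : ∀ u : Fin m, k ≤ (u : ℕ) → σ u = u) (g : Fin m → β) :
    TailSortedAboveHead k (g ∘ σ) ↔ TailSortedAboveHead k g := by
  have hfix : ∀ v : Fin m, k ≤ (v : ℕ) → g (σ v) = g v := fun v hv => by rw [hσ v hv]
  refine and_congr ⟨fun h u v hu huv => ?_, fun h u v hu huv => ?_⟩
    ⟨fun h u v hu hv => ?_, fun h u v hu hv => ?_⟩
  · simpa only [Function.comp, hfix u hu, hfix v (hu.trans huv)] using h u v hu huv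
  · simpa only [Function.comp, hfix u hu, hfix v (hu.trans huv)] using h u v hu huv
  · have := h (σ.symm u) v ((apply_lt_iff_of_fixes_ge hσ _).1 (by simpa using hu)) hv
    simpa only [Function.comp, apply_symm_apply, hfix v hv.ge] using this
  · simpa only [Function.comp, hfix v hv.ge] using
      h (σ u) v ((apply_lt_iff_of_fixes_ge hσ u).2 hu) hv

theorem monotone_comp_permCastLEEquiv_iff (hk : k ≤ m) (g : Fin m → β) (τ : Perm (Fin k)) :
    Monotone (g ∘ (permCastLEEquiv hk τ : Perm (Fin m))) ↔
      Monotone ((g ∘ Fin.castLE hk) ∘ τ) ∧ TailSortedAboveHead k g := by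
  have hhead : g ∘ (permCastLEEquiv hk τ : Perm (Fin m)) ∘ Fin.castLE hk =
      (g ∘ Fin.castLE hk) ∘ τ := by
    ext u
    simp [permCastLEEquiv_apply_castLE]
  rw [monotone_iff_head_and_tailSortedAboveHead hk, Function.comp_assoc, hhead,
    tailSortedAboveHead_comp_perm_iff (permCastLEEquiv hk τ).2]

end Monotonicity

section Rearrangements

variable {α β : Type*} [Fintype α] [DecidableEq α] [DecidableEq β]

theorem card_fiber_comp_perm_eq_card_stabilizer (a : α → β) (σ : Perm α) :
    #{τ : Perm α | a ∘ τ = a ∘ σ} = #{τ : Perm α | a ∘ τ = a} :=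
  card_equiv (Equiv.mulRight σ⁻¹) fun τ => by
    simp only [mem_filter, mem_univ, true_and, Equiv.coe_mulRight, Perm.coe_mul, Perm.inv_def,
      ← Function.comp_assoc, comp_symm_eq]

theorem card_image_comp_perm_mul_card_stabilizer (a : α → β) :
    #(univ.image fun σ : Perm α => a ∘ σ) * #{τ : Perm α | a ∘ τ = a} = (Fintype.card α)! := by
  calc _ = ∑ b ∈ univ.image (fun σ : Perm α => a ∘ σ), #{τ : Perm α | a ∘ τ = b} := by
        refine (sum_const_nat fun b hb => ?_).symm
        obtain ⟨σ, -, rfl⟩ := mem_image.1 hb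
        exact card_fiber_comp_perm_eq_card_stabilizer a σ
    _ = (Fintype.card α)! := by
        rw [← card_eq_sum_card_image, Finset.card_univ, Fintype.card_perm]

theorem card_monotone_comp_perm_eq_card_stabilizer {k : ℕ} [LinearOrder β] (a : Fin k → β) :
    #{τ : Perm (Fin k) | Monotone (a ∘ τ)} = #{τ : Perm (Fin k) | a ∘ τ = a} := by
  simp only [← Tuple.comp_sort_eq_comp_iff_monotone]
  exact card_fiber_comp_perm_eq_card_stabilizer a _

end Rearrangements

theorem indexClass_eq_image (n k : ℕ) (a : Fin k → Fin n) :
    indexClass n k a = univ.image fun σ : Perm (Fin k) => a ∘ σ := by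
  ext b
  simp [indexClass, eq_comm, Function.comp_def]

theorem inv_factorial_mul_sum_ite_monotone_comp_perm {K : Type*} [Field K] [CharZero K] {n k : ℕ}
    (a : Fin k → Fin n) (x : K) :
    (k ! : K)⁻¹ * ∑ τ : Perm (Fin k), (if Monotone (a ∘ τ) then x else 0) =
      x / #(indexClass n k a) := by
  have hcount := card_image_comp_perm_mul_card_stabilizer a
  rw [← indexClass_eq_image, Fintype.card_fin] at hcount
  have hstab : #{τ : Perm (Fin k) | a ∘ τ = a} ≠ 0 :=
    card_ne_zero_of_mem (s := univ.filter _) (a := 1) (by simp)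
  rw [sum_ite, sum_const, sum_const_zero, add_zero, nsmul_eq_mul,
    card_monotone_comp_perm_eq_card_stabilizer, ← hcount]
  push_cast
  rw [mul_inv, mul_assoc, inv_mul_cancel_left₀ (Nat.cast_ne_zero.2 hstab), div_eq_inv_mul]

open Classical in
theorem apply_comp_perm_eq_ite {β M : Type*} [PartialOrder β] [Zero M] {m : ℕ}
    {c : (Fin m → β) → M} (hc : ∀ g, ¬ Monotone g → c g = 0) {j : Fin m → β} (hj : Monotone j)
    (σ : Perm (Fin m)) : c (j ∘ σ) = if Monotone (j ∘ σ) then c j else 0 := by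
  split_ifs with h
  · rw [Tuple.unique_monotone (τ := 1) h (by simpa using hj)]
    rfl
  · exact hc _ h

/-- `c_i(S_k L_P) = c_{i*}(L_P)/|[(i₁,…,i_k)]|` if `(i_{k+1},…,i_m)` is
nondecreasing and `max{i₁,…,i_k} ≤ i_{k+1}`, and `c_i(S_k L_P) = 0` otherwise.
Here `j = i*` is the nondecreasing rearrangement of `i`. -/
theorem coeff_partialSym (n m k : ℕ) (hk : k ≤ m)
    (c : (Fin m → Fin n) → ℂ)
    (hc : ∀ j : Fin m → Fin n, ¬ Monotone j → c j = 0)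
    (i : Fin m → Fin n)
    (j : Fin m → Fin n) (hj : Monotone j)
    (hij : ∃ σ : Equiv.Perm (Fin m), ∀ u : Fin m, i u = j (σ u)) :
    ((((∀ u v : Fin m, k ≤ (u : ℕ) → u ≤ v → i u ≤ i v) ∧
        (∀ u v : Fin m, (u : ℕ) < k → (v : ℕ) = k → i u ≤ i v)) →
      coeff n m (partialSym n m k (LP n m c)) i =
        c j / ((indexClass n k (fun u : Fin k => i (Fin.castLE hk u))).card : ℂ)) ∧
    ((¬ ((∀ u v : Fin m, k ≤ (u : ℕ) → u ≤ v → i u ≤ i v) ∧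
        (∀ u v : Fin m, (u : ℕ) < k → (v : ℕ) = k → i u ≤ i v))) →
      coeff n m (partialSym n m k (LP n m c)) i = 0)) := by
  classical
  obtain ⟨σ₀, hσ₀⟩ := hij
  have hterm (τ : Perm (Fin k)) : c (i ∘ (permCastLEEquiv hk τ : Perm (Fin m))) =
      if Monotone ((i ∘ Fin.castLE hk) ∘ τ) ∧ TailSortedAboveHead k i then c j else 0 := by
    have hrearr : i ∘ (permCastLEEquiv hk τ : Perm (Fin m)) = j ∘ ⇑(σ₀ * permCastLEEquiv hk τ) :=
      funext fun u => hσ₀ _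
    rw [hrearr, apply_comp_perm_eq_ite hc hj, ← hrearr]
    simp only [monotone_comp_permCastLEEquiv_iff]
  have hsum : coeff n m (partialSym n m k (LP n m c)) i = (k ! : ℂ)⁻¹ *
      ∑ τ : Perm (Fin k), if Monotone ((i ∘ Fin.castLE hk) ∘ τ) ∧ TailSortedAboveHead k i
        then c j else 0 := by
    rw [coeff_partialSym_LP, sum_perm_fixing_ge_eq_sum_permCastLEEquiv hk fun σ => c (i ∘ σ)]
    simp only [hterm]
  refine ⟨fun hsorted => ?_, fun hunsorted => ?_⟩
  · rw [hsum]
    simp only [show TailSortedAboveHead k i from hsorted, and_true]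
    exact inv_factorial_mul_sum_ite_monotone_comp_perm _ _
  · rw [hsum]
    simp [show ¬ TailSortedAboveHead k i from hunsorted]
end

section
/- For every n and every fixed subset structure, fix u,v ∈ {1,...,m} and define D^{u,v} ∈ ℂ^{I(n,m)} by c_i(D^{u,v}) = 1 if i_u = i_v, else 0. Then for every 1-unconditional norm ‖·‖ on ℂⁿ and every m-form L : (ℂⁿ)^m → ℂ, sup_{‖x⁽ᵏ⁾‖≤1} |(D^{u,v} ⊙ L)(x⁽¹⁾,...,x⁽ᵐ⁾)| ≤ sup_{‖x⁽ᵏ⁾‖≤1} |L(x⁽¹⁾,...,x⁽ᵐ⁾)|. -/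
private lemma zpow_sum' {α : Type*} (ζ : ℂ) (hζ : ζ ≠ 0) (s : Finset α) (e : α → ℤ) :
    ζ ^ (∑ k ∈ s, e k) = ∏ k ∈ s, ζ ^ e k := by
  induction s using Finset.cons_induction with
  | empty => simp
  | cons a s ha ih => rw [Finset.sum_cons, Finset.prod_cons, zpow_add₀ hζ, ih]

/-- The Schur product `A ⊙ L` of a coefficient array `A` with an `m`-form `L`:
the `m`-form with coefficients `c_i(A)·c_i(L)`. -/
noncomputable def schurMul (n m : ℕ) (A : (Fin m → Fin n) → ℂ)
    (L : MultilinearMap ℂ (fun _ : Fin m => (Fin n → ℂ)) ℂ) :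
    (Fin m → (Fin n → ℂ)) → ℂ :=
  fun x => ∑ i : Fin m → Fin n,
    A i * L (fun k => Pi.single (i k) 1) * ∏ k : Fin m, x k (i k)

/-- `c_i(D^{u,v}) = 1` if `i_u = i_v`, else `0`. -/
noncomputable def Dmat (n m : ℕ) (u v : Fin m) : (Fin m → Fin n) → ℂ :=
  fun i => if i u = i v then 1 else 0

/-- Schur multiplication by `D^{u,v}` does not increase the norm of an `m`-form,
for any `1`-unconditional norm `N` on `ℂⁿ`. -/
theorem schur_norm_Dmat (n m : ℕ) (u v : Fin m)
    (N : (Fin n → ℂ) → ℝ)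
    (hN_tri : ∀ x y : Fin n → ℂ, N (x + y) ≤ N x + N y)
    (hN_smul : ∀ (a : ℂ) (x : Fin n → ℂ), N (a • x) = ‖a‖ * N x)
    (hN_def : ∀ x : Fin n → ℂ, N x = 0 → x = 0)
    (hN_unc : ∀ x y : Fin n → ℂ, (∀ j, ‖x j‖ ≤ ‖y j‖) → N x ≤ N y)
    (L : MultilinearMap ℂ (fun _ : Fin m => (Fin n → ℂ)) ℂ)
    (x : Fin m → (Fin n → ℂ)) (hx : ∀ k, N (x k) ≤ 1) :
    ‖schurMul n m (Dmat n m u v) L x‖ ≤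
      ⨆ y : {y : Fin m → (Fin n → ℂ) // ∀ k, N (y k) ≤ 1}, ‖L y.1‖ := by
  -- basic facts about N
  have hN0 : N 0 = 0 := by simpa using hN_smul 0 0
  have hN_nonneg : ∀ z, 0 ≤ N z := by
    intro z
    have h1 : N (z + (-1 : ℂ) • z) ≤ N z + N ((-1 : ℂ) • z) := hN_tri _ _
    have h2 : N ((-1 : ℂ) • z) = N z := by rw [hN_smul]; simp
    have h3 : z + (-1 : ℂ) • z = 0 := by simp
    rw [h3, hN0, h2] at h1; linarith
  set c : (Fin m → Fin n) → ℂ := fun i => L (fun k => Pi.single (i k) 1) with hc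
  -- multilinear expansion
  have expand : ∀ z : Fin m → (Fin n → ℂ),
      L z = ∑ i : Fin m → Fin n, (∏ k, z k (i k)) * c i := by
    intro z
    have hz : ∀ k, z k = ∑ j : Fin n, z k j • ((Pi.single j 1 : Fin n → ℂ)) := by
      intro k
      rw [← Finset.univ_sum_single (z k)]
      refine Finset.sum_congr rfl fun j _ => ?_
      ext l
      simp [Pi.single_apply, mul_comm]
    calc L z = L (fun k => ∑ j : Fin n, z k j • ((Pi.single j 1 : Fin n → ℂ))) := by
          congr 1; funext k; exact hz k
      _ = ∑ i : Fin m → Fin n, L (fun k => z k (i k) • ((Pi.single (i k) 1 : Fin n → ℂ))) :=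
          L.map_sum (fun k j => z k j • ((Pi.single j 1 : Fin n → ℂ)))
      _ = ∑ i : Fin m → Fin n, (∏ k, z k (i k)) * c i := by
          refine Finset.sum_congr rfl fun i _ => ?_
          rw [L.map_smul_univ (fun k => z k (i k)) (fun k => Pi.single (i k) (1:ℂ))]
          simp [hc]
  -- bounded above
  have hbdd : BddAbove (Set.range
      fun y : {y : Fin m → (Fin n → ℂ) // ∀ k, N (y k) ≤ 1} => ‖L y.1‖) := by
    set C : Fin n → ℝ := fun j => (N (Pi.single j 1))⁻¹ with hC
    have hsingle_pos : ∀ j, 0 < N (Pi.single j 1) := by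
      intro j
      rcases lt_or_eq_of_le (hN_nonneg (Pi.single j 1)) with h | h
      · exact h
      · exfalso
        have := hN_def _ h.symm
        have h1 := congrFun this j
        simp at h1
    have hCnn : ∀ j, 0 ≤ C j := fun j => inv_nonneg.2 (hN_nonneg _)
    refine ⟨∑ i : Fin m → Fin n, (∏ k, C (i k)) * ‖c i‖, ?_⟩
    rintro r ⟨⟨z, hz⟩, rfl⟩
    have hcoord : ∀ k j, ‖z k j‖ ≤ C j := by
      intro k j
      have hle : N (z k j • ((Pi.single j 1 : Fin n → ℂ))) ≤ N (z k) := by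
        apply hN_unc
        intro l
        rcases eq_or_ne l j with rfl | hne
        · simp
        · simp [Pi.single_apply, hne]
      rw [hN_smul] at hle
      have h1 : ‖z k j‖ * N (Pi.single j 1) ≤ 1 := by
        calc ‖z k j‖ * N (Pi.single j 1) ≤ N (z k) := by
              simpa using hle
          _ ≤ 1 := hz k
      show ‖z k j‖ ≤ (N (Pi.single j 1))⁻¹
      rw [inv_eq_one_div, le_div_iff₀ (hsingle_pos j)]
      exact h1
    calc ‖L z‖ = ‖∑ i : Fin m → Fin n, (∏ k, z k (i k)) * c i‖ := by rw [expand]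
      _ ≤ ∑ i : Fin m → Fin n, ‖(∏ k, z k (i k)) * c i‖ := norm_sum_le _ _
      _ ≤ ∑ i : Fin m → Fin n, (∏ k, C (i k)) * ‖c i‖ := by
          refine Finset.sum_le_sum fun i _ => ?_
          rw [norm_mul, norm_prod]
          refine mul_le_mul_of_nonneg_right ?_ (norm_nonneg _)
          exact Finset.prod_le_prod (fun k _ => norm_nonneg _) (fun k _ => hcoord k (i k))
  set S : ℝ := ⨆ y : {y : Fin m → (Fin n → ℂ) // ∀ k, N (y k) ≤ 1}, ‖L y.1‖ with hS
  -- case n = 0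
  rcases Nat.eq_zero_or_pos n with hn | hn
  · subst hn
    haveI : IsEmpty (Fin m → Fin 0) := ⟨fun i => (i u).elim0⟩
    have h0 : schurMul 0 m (Dmat 0 m u v) L x = 0 := by
      unfold schurMul; rw [Finset.univ_eq_empty, Finset.sum_empty]
    rw [h0, norm_zero]
    exact Real.iSup_nonneg fun y => norm_nonneg _
  -- main case
  set ζ : ℂ := Complex.exp (2 * Real.pi * Complex.I / n) with hzeta
  have hζ : IsPrimitiveRoot ζ n := Complex.isPrimitiveRoot_exp n hn.ne'
  have hζ0 : ζ ≠ 0 := Complex.exp_ne_zero _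
  have hζnorm : ‖ζ‖ = 1 := by
    have h : ‖ζ‖ ^ n = 1 := by rw [← norm_pow, hζ.pow_eq_one, norm_one]
    rcases lt_trichotomy ‖ζ‖ 1 with hlt | heq | hgt
    · have := pow_lt_one₀ (norm_nonneg ζ) hlt hn.ne'; linarith
    · exact heq
    · have := one_lt_pow₀ hgt hn.ne'; linarith
  set ε : Fin m → ℤ := fun k => (if k = u then 1 else 0) - (if k = v then 1 else 0) with hε
  have hεsum : ∀ i : Fin m → Fin n, ∑ k, (i k : ℤ) * ε k = (i u : ℤ) - (i v : ℤ) := by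
    intro i
    simp only [hε, mul_sub, mul_ite, mul_one, mul_zero]
    rw [Finset.sum_sub_distrib]
    simp [Finset.sum_ite_eq']
  set y : ℕ → Fin m → Fin n → ℂ := fun t k j => ζ ^ ((t : ℤ) * (j : ℤ) * ε k) * x k j with hy
  have hy_ball : ∀ t, ∀ k, N (y t k) ≤ 1 := by
    intro t k
    refine le_trans (hN_unc _ (x k) fun j => ?_) (hx k)
    simp only [hy]
    rw [norm_mul, norm_zpow, hζnorm, one_zpow, one_mul]
  have hLy : ∀ t : ℕ, L (y t) = ∑ i : Fin m → Fin n,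
      ζ ^ ((t : ℤ) * ((i u : ℤ) - (i v : ℤ))) * ((∏ k, x k (i k)) * c i) := by
    intro t
    rw [expand (y t)]
    refine Finset.sum_congr rfl fun i _ => ?_
    have h1 : (∏ k, y t k (i k))
        = ζ ^ ((t : ℤ) * ((i u : ℤ) - (i v : ℤ))) * ∏ k, x k (i k) := by
      simp only [hy]
      rw [Finset.prod_mul_distrib]
      congr 1
      rw [← zpow_sum' ζ hζ0 Finset.univ (fun k => (t : ℤ) * (i k : ℤ) * ε k)]
      congr 1
      simp_rw [mul_assoc]
      rw [← Finset.mul_sum, hεsum i]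
    rw [h1, mul_assoc]
  have hgeom : ∀ i : Fin m → Fin n,
      ∑ t ∈ Finset.range n, ζ ^ ((t : ℤ) * ((i u : ℤ) - (i v : ℤ)))
        = if i u = i v then (n : ℂ) else 0 := by
    intro i
    set d : ℤ := (i u : ℤ) - (i v : ℤ) with hd
    have hzt : ∀ t : ℕ, ζ ^ ((t : ℤ) * d) = (ζ ^ d) ^ t := by
      intro t
      rw [mul_comm, zpow_mul, zpow_natCast]
    simp_rw [hzt]
    by_cases h : i u = i v
    · have hd0 : d = 0 := by simp [hd, h]
      simp [hd0, h]
    · rw [if_neg h]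
      have hd0 : d ≠ 0 := by
        simp only [hd, sub_ne_zero, Ne]
        intro he
        exact h (Fin.ext (by exact_mod_cast he))
      have hne1 : ζ ^ d ≠ 1 := by
        intro h1
        have hdvd := (hζ.zpow_eq_one_iff_dvd d).mp h1
        have hu2 : (i u : ℤ) < n := by exact_mod_cast (i u).isLt
        have hv2 : (i v : ℤ) < n := by exact_mod_cast (i v).isLt
        have hu1 : (0 : ℤ) ≤ (i u : ℤ) := Int.natCast_nonneg _
        have hv1 : (0 : ℤ) ≤ (i v : ℤ) := Int.natCast_nonneg _
        have habs : |d| < (n : ℤ) := by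
          rw [abs_lt]
          constructor <;> [skip; skip] <;> simp only [hd] <;> omega
        exact hd0 (Int.eq_zero_of_abs_lt_dvd hdvd habs)
      have hpow1 : (ζ ^ d) ^ n = 1 := by
        rw [← zpow_natCast, ← zpow_mul, mul_comm, zpow_mul, zpow_natCast,
          hζ.pow_eq_one, one_zpow]
      rw [geom_sum_eq hne1, hpow1]
      simp
  have sum_eq : ∑ t ∈ Finset.range n, L (y t)
      = (n : ℂ) * schurMul n m (Dmat n m u v) L x := by
    calc ∑ t ∈ Finset.range n, L (y t)
        = ∑ t ∈ Finset.range n, ∑ i : Fin m → Fin n,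
            ζ ^ ((t : ℤ) * ((i u : ℤ) - (i v : ℤ))) * ((∏ k, x k (i k)) * c i) :=
          Finset.sum_congr rfl fun t _ => hLy t
      _ = ∑ i : Fin m → Fin n,
            (∑ t ∈ Finset.range n, ζ ^ ((t : ℤ) * ((i u : ℤ) - (i v : ℤ))))
              * ((∏ k, x k (i k)) * c i) := by
          rw [Finset.sum_comm]
          exact Finset.sum_congr rfl fun i _ => (Finset.sum_mul _ _ _).symm
      _ = (n : ℂ) * schurMul n m (Dmat n m u v) L x := by
          unfold schurMul Dmat
          rw [Finset.mul_sum]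
          refine Finset.sum_congr rfl fun i _ => ?_
          rw [hgeom i]
          simp only [hc]
          split_ifs <;> ring
  have key : schurMul n m (Dmat n m u v) L x
      = (n : ℂ)⁻¹ * ∑ t ∈ Finset.range n, L (y t) := by
    rw [sum_eq, ← mul_assoc, inv_mul_cancel₀ (by exact_mod_cast hn.ne' : (n : ℂ) ≠ 0), one_mul]
  rw [key, norm_mul, norm_inv, Complex.norm_natCast]
  have hS_each : ∀ t : ℕ, ‖L (y t)‖ ≤ S := fun t => le_ciSup hbdd ⟨y t, hy_ball t⟩
  calc (n : ℝ)⁻¹ * ‖∑ t ∈ Finset.range n, L (y t)‖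
      ≤ (n : ℝ)⁻¹ * ∑ t ∈ Finset.range n, ‖L (y t)‖ :=
        mul_le_mul_of_nonneg_left (norm_sum_le _ _) (by positivity)
    _ ≤ (n : ℝ)⁻¹ * ∑ t ∈ Finset.range n, S :=
        mul_le_mul_of_nonneg_left (Finset.sum_le_sum fun t _ => hS_each t) (by positivity)
    _ = S := by
        rw [Finset.sum_const, Finset.card_range, nsmul_eq_mul, ← mul_assoc,
          inv_mul_cancel₀ (by exact_mod_cast hn.ne' : (n : ℝ) ≠ 0), one_mul]
end

section
/- Fix u,v ∈ {1,...,m} and define T^{u,v} ∈ ℂ^{I(n,m)} by c_i(T^{u,v}) = 1 if i_u ≤ i_v, else 0. Then for every 1-unconditional norm ‖·‖ on ℂⁿ and every m-form L, sup_{‖x⁽ᵏ⁾‖≤1} |(T^{u,v} ⊙ L)(x⁽¹⁾,...,x⁽ᵐ⁾)| ≤ log₂(2n) · sup_{‖x⁽ᵏ⁾‖≤1} |L(x⁽¹⁾,...,x⁽ᵐ⁾)|. -/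
/-- `c_i(D^{u,v}) = 1` if `i_u = i_v`, else `0`. -/
noncomputable def Tmat (n m : ℕ) (u v : Fin m) : (Fin m → Fin n) → ℂ :=
  fun i => if i u ≤ i v then 1 else 0

open Finset

section SchurMul

variable {n m : ℕ} (L : MultilinearMap ℂ (fun _ : Fin m => Fin n → ℂ) ℂ)

theorem schurMul_sum {ι : Type*} (s : Finset ι) (A : ι → (Fin m → Fin n) → ℂ)
    (x : Fin m → Fin n → ℂ) :
    schurMul n m (fun i => ∑ r ∈ s, A r i) L x = ∑ r ∈ s, schurMul n m (A r) L x := by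
  simp only [schurMul, sum_mul]
  exact sum_comm

theorem schurMul_const_mul (a : ℂ) (A : (Fin m → Fin n) → ℂ) (x : Fin m → Fin n → ℂ) :
    schurMul n m (fun i => a * A i) L x = a * schurMul n m A L x := by
  simp only [schurMul, mul_sum, mul_assoc]

theorem schurMul_prod (c x : Fin m → Fin n → ℂ) :
    schurMul n m (fun i => ∏ k, c k (i k)) L x = L (c * x) := by
  have hcx : c * x = fun k => ∑ j, (c k j * x k j) • (Pi.single j 1 : Fin n → ℂ) := by
    funext k
    simp only [← Pi.single_smul', smul_eq_mul, mul_one]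
    exact (univ_sum_single _).symm
  rw [hcx, L.map_sum]
  refine sum_congr rfl fun i _ => ?_
  rw [L.map_smul_univ, prod_mul_distrib, smul_eq_mul]
  ring

theorem schurMul_one : schurMul n m (fun _ => 1) L = L := by
  funext x
  simpa using schurMul_prod L 1 x

theorem continuous_schurMul (A : (Fin m → Fin n) → ℂ) : Continuous (schurMul n m A L) := by
  unfold schurMul
  fun_prop

end SchurMul

theorem ite_eq_eq_sum_addChar {R : Type*} [CommRing R] [Fintype R] [DecidableEq R]
    {ψ : AddChar R ℂ} (hψ : ψ.IsPrimitive) (a b : R) :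
    (if a = b then 1 else 0 : ℂ) = (Fintype.card R : ℂ)⁻¹ * ∑ r, ψ (r * a) * ψ (-(r * b)) := by
  have h := AddChar.sum_mulShift (a - b) hψ
  simp_rw [mul_sub, sub_eq_add_neg, AddChar.map_add_eq_mul] at h
  simp only [h, add_neg_eq_zero]
  split_ifs <;> simp

section UnconditionalNorm

variable {n m : ℕ} {N : (Fin n → ℂ) → ℝ}

noncomputable def formNorm (N : (Fin n → ℂ) → ℝ)
    (L : MultilinearMap ℂ (fun _ : Fin m => Fin n → ℂ) ℂ) : ℝ :=
  ⨆ y : {y : Fin m → Fin n → ℂ // ∀ k, N (y k) ≤ 1}, ‖L y.1‖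

theorem norm_apply_mul_le
    (hN_smul : ∀ (a : ℂ) (x : Fin n → ℂ), N (a • x) = ‖a‖ * N x)
    (hN_unc : ∀ x y : Fin n → ℂ, (∀ j, ‖x j‖ ≤ ‖y j‖) → N x ≤ N y) (y : Fin n → ℂ) (j : Fin n) :
    ‖y j‖ * N (Pi.single j 1) ≤ N y := by
  rw [← hN_smul]
  refine hN_unc _ _ fun l => ?_
  rcases eq_or_ne l j with rfl | hl
  · simp
  · simp [hl]

theorem apply_single_pos
    (hN_smul : ∀ (a : ℂ) (x : Fin n → ℂ), N (a • x) = ‖a‖ * N x)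
    (hN_def : ∀ x : Fin n → ℂ, N x = 0 → x = 0)
    (hN_unc : ∀ x y : Fin n → ℂ, (∀ j, ‖x j‖ ≤ ‖y j‖) → N x ≤ N y) (j : Fin n) :
    0 < N (Pi.single j 1) := by
  have h0 : N 0 = 0 := by simpa using hN_smul 0 0
  refine lt_of_le_of_ne (h0 ▸ hN_unc 0 _ fun _ => by simp) fun h => ?_
  simpa using congrFun (hN_def _ h.symm) j

theorem isBounded_setOf_le_one
    (hN_smul : ∀ (a : ℂ) (x : Fin n → ℂ), N (a • x) = ‖a‖ * N x)
    (hN_def : ∀ x : Fin n → ℂ, N x = 0 → x = 0)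
    (hN_unc : ∀ x y : Fin n → ℂ, (∀ j, ‖x j‖ ≤ ‖y j‖) → N x ≤ N y) :
    Bornology.IsBounded {y | N y ≤ 1} := by
  refine (Bornology.IsBounded.pi fun j => Metric.isBounded_closedBall
    (x := (0 : ℂ)) (r := (N (Pi.single j 1))⁻¹)).subset fun y hy j _ => ?_
  have hj := apply_single_pos hN_smul hN_def hN_unc j
  rw [mem_closedBall_zero_iff, ← one_div, le_div_iff₀ hj]
  exact (norm_apply_mul_le hN_smul hN_unc y j).trans hy

theorem bddAbove_range_norm_apply
    (hN_smul : ∀ (a : ℂ) (x : Fin n → ℂ), N (a • x) = ‖a‖ * N x)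
    (hN_def : ∀ x : Fin n → ℂ, N x = 0 → x = 0)
    (hN_unc : ∀ x y : Fin n → ℂ, (∀ j, ‖x j‖ ≤ ‖y j‖) → N x ≤ N y)
    (L : MultilinearMap ℂ (fun _ : Fin m => Fin n → ℂ) ℂ) :
    BddAbove (Set.range fun y : {y : Fin m → Fin n → ℂ // ∀ k, N (y k) ≤ 1} => ‖L y.1‖) := by
  have hK := Bornology.IsBounded.pi fun _ : Fin m => isBounded_setOf_le_one hN_smul hN_def hN_unc
  have hL : Continuous fun y => ‖L y‖ := schurMul_one L ▸ (continuous_schurMul L _).norm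
  refine (hK.isCompact_closure.bddAbove_image hL.continuousOn).mono ?_
  rintro _ ⟨y, rfl⟩
  exact ⟨y.1, subset_closure fun k _ => y.2 k, rfl⟩

theorem norm_apply_le_formNorm
    (hN_smul : ∀ (a : ℂ) (x : Fin n → ℂ), N (a • x) = ‖a‖ * N x)
    (hN_def : ∀ x : Fin n → ℂ, N x = 0 → x = 0)
    (hN_unc : ∀ x y : Fin n → ℂ, (∀ j, ‖x j‖ ≤ ‖y j‖) → N x ≤ N y)
    (L : MultilinearMap ℂ (fun _ : Fin m => Fin n → ℂ) ℂ) {y : Fin m → Fin n → ℂ}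
    (hy : ∀ k, N (y k) ≤ 1) :
    ‖L y‖ ≤ formNorm N L :=
  le_ciSup (f := fun z : {y : Fin m → Fin n → ℂ // ∀ k, N (y k) ≤ 1} => ‖L z.1‖)
    (bddAbove_range_norm_apply hN_smul hN_def hN_unc L) ⟨y, hy⟩

theorem norm_schurMul_prod_le
    (hN_smul : ∀ (a : ℂ) (x : Fin n → ℂ), N (a • x) = ‖a‖ * N x)
    (hN_def : ∀ x : Fin n → ℂ, N x = 0 → x = 0)
    (hN_unc : ∀ x y : Fin n → ℂ, (∀ j, ‖x j‖ ≤ ‖y j‖) → N x ≤ N y)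
    (L : MultilinearMap ℂ (fun _ : Fin m => Fin n → ℂ) ℂ) {c x : Fin m → Fin n → ℂ}
    (hc : ∀ k j, ‖c k j‖ ≤ 1) (hx : ∀ k, N (x k) ≤ 1) :
    ‖schurMul n m (fun i => ∏ k, c k (i k)) L x‖ ≤ formNorm N L := by
  rw [schurMul_prod]
  refine norm_apply_le_formNorm hN_smul hN_def hN_unc L fun k =>
    (hN_unc _ _ fun j => ?_).trans (hx k)
  simpa [norm_mul] using mul_le_of_le_one_left (norm_nonneg _) (hc k j)

theorem norm_schurMul_ite_eq_le {R : Type*} [CommRing R] [Fintype R] [DecidableEq R]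
    (hN_smul : ∀ (a : ℂ) (x : Fin n → ℂ), N (a • x) = ‖a‖ * N x)
    (hN_def : ∀ x : Fin n → ℂ, N x = 0 → x = 0)
    (hN_unc : ∀ x y : Fin n → ℂ, (∀ j, ‖x j‖ ≤ ‖y j‖) → N x ≤ N y)
    (L : MultilinearMap ℂ (fun _ : Fin m => Fin n → ℂ) ℂ) (u v : Fin m)
    {ψ : AddChar R ℂ} (hψ : ψ.IsPrimitive) {α : Fin n → ℂ} (hα : ∀ j, ‖α j‖ ≤ 1)
    (f g : Fin n → R) {x : Fin m → Fin n → ℂ} (hx : ∀ k, N (x k) ≤ 1) :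
    ‖schurMul n m (fun i => α (i u) * if f (i u) = g (i v) then 1 else 0) L x‖ ≤
      formNorm N L := by
  set c : R → Fin m → Fin n → ℂ := fun r k j =>
    (if k = u then α j * ψ (r * f j) else 1) * if k = v then ψ (-(r * g j)) else 1
  have hmul : (fun i : Fin m → Fin n => α (i u) * if f (i u) = g (i v) then 1 else 0) =
      fun i => (Fintype.card R : ℂ)⁻¹ * ∑ r, ∏ k, c r k (i k) := by
    funext i
    rw [ite_eq_eq_sum_addChar hψ, mul_sum, mul_sum, mul_sum]
    refine sum_congr rfl fun r _ => ?_
    simp only [c, prod_mul_distrib, Fintype.prod_ite_eq']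
    ring
  have hc : ∀ r k j, ‖c r k j‖ ≤ 1 := by
    intro r k j
    simp only [c, norm_mul]
    split_ifs <;> simp [AddChar.norm_apply, hα]
  have hcard : (Fintype.card R : ℝ) ≠ 0 := Nat.cast_ne_zero.2 Fintype.card_ne_zero
  rw [hmul, schurMul_const_mul, schurMul_sum, norm_mul, norm_inv, Complex.norm_natCast]
  calc (Fintype.card R : ℝ)⁻¹ * ‖∑ r, schurMul n m (fun i => ∏ k, c r k (i k)) L x‖
      ≤ (Fintype.card R : ℝ)⁻¹ * ∑ _r : R, formNorm N L := by
        gcongr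
        exact norm_sum_le_of_le _ fun r _ =>
          norm_schurMul_prod_le hN_smul hN_def hN_unc L (hc r) hx
    _ = formNorm N L := by
        rw [sum_const, card_univ, nsmul_eq_mul, ← mul_assoc, inv_mul_cancel₀ hcard,
          one_mul]

end UnconditionalNorm

theorem ite_lt_sub_ite_lt_div_two {R : Type*} [Ring R] (a b : ℕ) :
    ((if a < b then 1 else 0) - if a / 2 < b / 2 then 1 else 0 : R) =
      (if a % 2 = 0 then 1 else 0) * if a + 1 = b then 1 else 0 := by
  split_ifs <;> first | omega | simp

theorem ite_le_eq_sum_range {R : Type*} [Ring R] {p q K : ℕ} (hq : q + 1 < 2 ^ K) :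
    (if p ≤ q then 1 else 0 : R) = ∑ t ∈ range K,
      (if p / 2 ^ t % 2 = 0 then 1 else 0) * if p / 2 ^ t + 1 = (q + 1) / 2 ^ t then 1 else 0 := by
  have hstep : ∀ t, ((if p / 2 ^ t % 2 = 0 then 1 else 0) *
      if p / 2 ^ t + 1 = (q + 1) / 2 ^ t then 1 else 0 : R) =
      (if p / 2 ^ t < (q + 1) / 2 ^ t then 1 else 0) -
        if p / 2 ^ (t + 1) < (q + 1) / 2 ^ (t + 1) then 1 else 0 := by
    intro t
    rw [pow_succ, ← Nat.div_div_eq_div_mul, ← Nat.div_div_eq_div_mul, ite_lt_sub_ite_lt_div_two]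
  rw [sum_congr rfl fun t _ => hstep t, sum_range_sub']
  simp [Nat.div_eq_of_lt hq]

/-- The compared values are at most `n`, so comparing them in `ZMod (n + 1)`, whose additive
characters are available, loses nothing. -/
theorem Tmat_eq_sum_range_size (n m : ℕ) (u v : Fin m) :
    Tmat n m u v = fun i => ∑ t ∈ range n.size,
      (if (i u : ℕ) / 2 ^ t % 2 = 0 then 1 else 0) *
        if (((i u : ℕ) / 2 ^ t + 1 : ℕ) : ZMod (n + 1)) =
            (((i v + 1 : ℕ) / 2 ^ t : ℕ) : ZMod (n + 1)) then 1 else 0 := by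
  funext i
  have hcast : ∀ t, (((i u : ℕ) / 2 ^ t + 1 : ℕ) : ZMod (n + 1)) =
      (((i v + 1 : ℕ) / 2 ^ t : ℕ) : ZMod (n + 1)) ↔ (i u : ℕ) / 2 ^ t + 1 = (i v + 1) / 2 ^ t := by
    intro t
    have hu := Nat.div_le_self (i u : ℕ) (2 ^ t)
    have hv := Nat.div_le_self ((i v : ℕ) + 1) (2 ^ t)
    rw [ZMod.natCast_eq_natCast_iff', Nat.mod_eq_of_lt (by omega), Nat.mod_eq_of_lt (by omega)]
  simp only [Tmat, hcast, Fin.le_def]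
  exact ite_le_eq_sum_range (by have := Nat.lt_size_self n; omega)

theorem Nat.size_le_logb_two_mul (n : ℕ) : (n.size : ℝ) ≤ Real.logb 2 (2 * n) := by
  rcases Nat.eq_zero_or_pos n with rfl | hn
  · simp
  have hsize : 0 < n.size := Nat.size_pos.2 hn
  have hpow : 2 ^ (n.size - 1) ≤ n := Nat.lt_size.1 (by omega)
  have hlog : ((n.size - 1 : ℕ) : ℝ) ≤ Real.logb 2 n :=
    (Real.le_logb_iff_rpow_le one_lt_two (by positivity)).2 (by
      rw [Real.rpow_natCast]; exact_mod_cast hpow)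
  rw [Real.logb_mul two_ne_zero (by positivity), Real.logb_self_eq_one one_lt_two]
  rw [Nat.cast_sub hsize] at hlog
  push_cast at hlog
  linarith

theorem schur_norm_Tmat_general (n m : ℕ) (u v : Fin m)
    (N : (Fin n → ℂ) → ℝ)
    (hN_smul : ∀ (a : ℂ) (x : Fin n → ℂ), N (a • x) = ‖a‖ * N x)
    (hN_def : ∀ x : Fin n → ℂ, N x = 0 → x = 0)
    (hN_unc : ∀ x y : Fin n → ℂ, (∀ j, ‖x j‖ ≤ ‖y j‖) → N x ≤ N y)
    (L : MultilinearMap ℂ (fun _ : Fin m => (Fin n → ℂ)) ℂ)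
    (x : Fin m → (Fin n → ℂ)) (hx : ∀ k, N (x k) ≤ 1) :
    ‖schurMul n m (Tmat n m u v) L x‖ ≤
      Real.logb 2 (2 * n) * ⨆ y : {y : Fin m → (Fin n → ℂ) // ∀ k, N (y k) ≤ 1}, ‖L y.1‖ := by
  have hS : 0 ≤ formNorm N L := Real.iSup_nonneg fun _ => norm_nonneg _
  rw [Tmat_eq_sum_range_size, schurMul_sum]
  calc _ ≤ ∑ _t ∈ range n.size, formNorm N L :=
        norm_sum_le_of_le _ fun t _ => norm_schurMul_ite_eq_le hN_smul hN_def hN_unc L u v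
          (ZMod.isPrimitive_stdAddChar (n + 1))
          (α := fun j => if (j : ℕ) / 2 ^ t % 2 = 0 then 1 else 0) (fun j => by split_ifs <;> simp)
          (fun j => (((j : ℕ) / 2 ^ t + 1 : ℕ) : ZMod (n + 1)))
          (fun j => (((j + 1 : ℕ) / 2 ^ t : ℕ) : ZMod (n + 1))) hx
    _ = n.size * formNorm N L := by rw [sum_const, card_range, nsmul_eq_mul]
    _ ≤ Real.logb 2 (2 * n) * formNorm N L := by gcongr; exact Nat.size_le_logb_two_mul n

/-- Schur multiplication by `D^{u,v}` does not increase the norm of an `m`-form,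
for any `1`-unconditional norm `N` on `ℂⁿ`. -/
theorem schur_norm_Tmat (n m : ℕ) (u v : Fin m)
    (N : (Fin n → ℂ) → ℝ)
    (hN_tri : ∀ x y : Fin n → ℂ, N (x + y) ≤ N x + N y)
    (hN_smul : ∀ (a : ℂ) (x : Fin n → ℂ), N (a • x) = ‖a‖ * N x)
    (hN_def : ∀ x : Fin n → ℂ, N x = 0 → x = 0)
    (hN_unc : ∀ x y : Fin n → ℂ, (∀ j, ‖x j‖ ≤ ‖y j‖) → N x ≤ N y)
    (L : MultilinearMap ℂ (fun _ : Fin m => (Fin n → ℂ)) ℂ)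
    (x : Fin m → (Fin n → ℂ)) (hx : ∀ k, N (x k) ≤ 1) :
    ‖schurMul n m (Tmat n m u v) L x‖ ≤
      Real.logb 2 (2 * n) * ⨆ y : {y : Fin m → (Fin n → ℂ) // ∀ k, N (y k) ≤ 1}, ‖L y.1‖ :=
  schur_norm_Tmat_general n m u v N hN_smul hN_def hN_unc L x hx
end

section
/- (Kwapień–Pełczyński main triangle projection bound) For every n and every matrix (a_{ij}) ∈ ℂ^{n×n}: sup_{‖x‖_∞≤1, ‖y‖_∞≤1} |Σ_{i≤j} a_{ij} y_i x_j| ≤ log₂(2n) · sup_{‖x‖_∞≤1, ‖y‖_∞≤1} |Σ_{i,j=1}^n a_{ij} y_i x_j|. -/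
/-!
For `φ, ψ < 2 ^ K`, compare `φ i < ψ j` lexicographically on binary digits. If the leading
bits of `φ i` and `ψ j` are `0` and `1`, the pair counts; this product mask costs one copy of
the full sup. Otherwise the pair counts iff the leading bits agree and the remaining `K - 1`
bits compare, and agreement of the bits equals `(1 + εᵢ δⱼ) / 2` for signs `ε, δ = ±1`, so
this part is the average of two instances of the same problem with one bit fewer. Hence
the bound `K · sup`, and for the triangle `i ≤ j ↔ i < j + 1` on `Fin n` one may take
`K = ⌊log₂ n⌋ + 1 ≤ log₂ (2n)`.
-/

open Finset

variable {𝕜 ι κ : Type*} [RCLike 𝕜] [Fintype ι] [Fintype κ]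

def pairing (a : ι → κ → 𝕜) (x : κ → 𝕜) (y : ι → 𝕜) : 𝕜 :=
  ∑ i, ∑ j, a i j * y i * x j

def maskLT (φ : ι → ℕ) (ψ : κ → ℕ) (a : ι → κ → 𝕜) (i : ι) (j : κ) : 𝕜 :=
  if φ i < ψ j then a i j else 0

def signOf (p : Prop) [Decidable p] : 𝕜 := if p then -1 else 1

lemma norm_signOf_mul (p : Prop) [Decidable p] (z : 𝕜) : ‖signOf p * z‖ = ‖z‖ := by
  unfold signOf; split_ifs <;> simp

lemma norm_ite_le_one {p : Prop} [Decidable p] {z : 𝕜} (hz : ‖z‖ ≤ 1) :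
    ‖if p then z else 0‖ ≤ 1 := by
  split_ifs <;> simp [hz]

lemma lt_iff_of_lt_two_mul {M m n : ℕ} (hm : m < 2 * M) (hn : n < 2 * M) :
    m < n ↔ m < M ∧ M ≤ n ∨ (M ≤ m ↔ M ≤ n) ∧ m % M < n % M := by
  have mod_of_le {k : ℕ} (hk : k < 2 * M) (h : M ≤ k) : k % M = k - M := by
    rw [Nat.mod_eq_sub_mod h, Nat.mod_eq_of_lt (by omega)]
  rcases lt_or_ge m M with hmM | hmM <;> rcases lt_or_ge n M with hnM | hnM
  · rw [Nat.mod_eq_of_lt hmM, Nat.mod_eq_of_lt hnM]; omega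
  · omega
  · omega
  · rw [mod_of_le hm hmM, mod_of_le hn hnM]; omega

/-- `(1 + signOf (M ≤ φ i) * signOf (M ≤ ψ j)) / 2` is the indicator that the leading bits
agree. -/
lemma pairing_maskLT_eq {M : ℕ} {φ : ι → ℕ} {ψ : κ → ℕ} (hφ : ∀ i, φ i < 2 * M)
    (hψ : ∀ j, ψ j < 2 * M) (a : ι → κ → 𝕜) (x : κ → 𝕜) (y : ι → 𝕜) :
    pairing (maskLT φ ψ a) x y =
      pairing a (fun j => if M ≤ ψ j then x j else 0) (fun i => if φ i < M then y i else 0) +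
      2⁻¹ * (pairing (maskLT (φ · % M) (ψ · % M) a) x y +
        pairing (maskLT (φ · % M) (ψ · % M) a) (fun j => signOf (M ≤ ψ j) * x j)
          (fun i => signOf (M ≤ φ i) * y i)) := by
  simp only [pairing, mul_sum, ← sum_add_distrib]
  refine sum_congr rfl fun i _ => sum_congr rfl fun j _ => ?_
  simp only [maskLT, signOf, lt_iff_of_lt_two_mul (hφ i) (hψ j)]
  split_ifs <;> first | omega | ring

lemma norm_pairing_maskLT_le {a : ι → κ → 𝕜} {S : ℝ}
    (hS : ∀ x y, (∀ j, ‖x j‖ ≤ 1) → (∀ i, ‖y i‖ ≤ 1) → ‖pairing a x y‖ ≤ S)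
    (K : ℕ) {φ : ι → ℕ} {ψ : κ → ℕ} (hφ : ∀ i, φ i < 2 ^ K) (hψ : ∀ j, ψ j < 2 ^ K)
    {x : κ → 𝕜} {y : ι → 𝕜} (hx : ∀ j, ‖x j‖ ≤ 1) (hy : ∀ i, ‖y i‖ ≤ 1) :
    ‖pairing (maskLT φ ψ a) x y‖ ≤ K * S := by
  induction K generalizing φ ψ x y with
  | zero =>
    have hmask : maskLT φ ψ a = 0 := by
      ext i j
      have := hφ i
      have := hψ j
      simp only [maskLT, Pi.zero_apply, ite_eq_right_iff]
      omega
    simp [hmask, pairing]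
  | succ K ih =>
    have hM : 0 < 2 ^ K := by positivity
    have hφ' i : φ i % 2 ^ K < 2 ^ K := Nat.mod_lt _ hM
    have hψ' j : ψ j % 2 ^ K < 2 ^ K := Nat.mod_lt _ hM
    rw [pairing_maskLT_eq (M := 2 ^ K) (fun i => pow_succ' 2 K ▸ hφ i)
      (fun j => pow_succ' 2 K ▸ hψ j)]
    have hhead := hS (fun j => if 2 ^ K ≤ ψ j then x j else 0)
      (fun i => if φ i < 2 ^ K then y i else 0)
      (fun j => norm_ite_le_one (hx j)) (fun i => norm_ite_le_one (hy i))
    have hsame := ih hφ' hψ' hx hy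
    have hflip := ih hφ' hψ' (x := fun j => signOf (2 ^ K ≤ ψ j) * x j)
      (y := fun i => signOf (2 ^ K ≤ φ i) * y i) (fun j => (norm_signOf_mul _ _).trans_le (hx j))
      (fun i => (norm_signOf_mul _ _).trans_le (hy i))
    calc _ ≤ S + 2⁻¹ * (K * S + K * S) := by
          refine (norm_add_le _ _).trans (add_le_add hhead ?_)
          rw [norm_mul, norm_inv, RCLike.norm_ofNat]
          gcongr
          exact (norm_add_le _ _).trans (add_le_add hsame hflip)
      _ = (K + 1 : ℕ) * S := by push_cast; ring

lemma norm_pairing_le_sum_norm (a : ι → κ → 𝕜) {x : κ → 𝕜} {y : ι → 𝕜}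
    (hx : ∀ j, ‖x j‖ ≤ 1) (hy : ∀ i, ‖y i‖ ≤ 1) : ‖pairing a x y‖ ≤ ∑ i, ∑ j, ‖a i j‖ := by
  calc ‖pairing a x y‖ ≤ ∑ i, ∑ j, ‖a i j * y i * x j‖ :=
        (norm_sum_le _ _).trans (sum_le_sum fun i _ => norm_sum_le _ _)
    _ ≤ ∑ i, ∑ j, ‖a i j‖ := by
        gcongr with i _ j _
        simpa [norm_mul] using
          mul_le_mul (mul_le_of_le_one_right (norm_nonneg _) (hy i)) (hx j) (norm_nonneg _)
            (norm_nonneg _)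

lemma norm_pairing_le_iSup (a : ι → κ → 𝕜) {x : κ → 𝕜} {y : ι → 𝕜}
    (hx : ∀ j, ‖x j‖ ≤ 1) (hy : ∀ i, ‖y i‖ ≤ 1) :
    ‖pairing a x y‖ ≤ ⨆ p : {p : (κ → 𝕜) × (ι → 𝕜) // (∀ j, ‖p.1 j‖ ≤ 1) ∧ ∀ i, ‖p.2 i‖ ≤ 1},
      ‖pairing a p.1.1 p.1.2‖ := by
  refine le_ciSup (f := fun p : {p : (κ → 𝕜) × (ι → 𝕜) // _} => ‖pairing a p.1.1 p.1.2‖)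
    ?_ ⟨(x, y), hx, hy⟩
  exact ⟨_, Set.forall_mem_range.2 fun p => norm_pairing_le_sum_norm a p.2.1 p.2.2⟩

lemma natLog_add_one_le_logb_two_mul {n : ℕ} (hn : n ≠ 0) :
    ((Nat.log 2 n + 1 : ℕ) : ℝ) ≤ Real.logb 2 (2 * n) := by
  rw [Real.logb_mul two_ne_zero (Nat.cast_ne_zero.2 hn), Real.logb_self_eq_one one_lt_two,
    Nat.cast_succ, add_comm]
  exact add_le_add_right (by exact_mod_cast Real.natLog_le_logb n 2) 1

/-- Kwapień–Pełczyński main triangle projection bound on `ℓ_∞ⁿ`: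
`sup_{‖x‖_∞,‖y‖_∞≤1} |Σ_{i≤j} a_{ij} y_i x_j| ≤ log₂(2n) · sup_{‖x‖_∞,‖y‖_∞≤1} |Σ_{i,j} a_{ij} y_i x_j|`. -/
theorem main_triangle_projection_linfty (n : ℕ) (a : Fin n → Fin n → ℂ)
    (x y : Fin n → ℂ) (hx : ∀ i, ‖x i‖ ≤ 1) (hy : ∀ i, ‖y i‖ ≤ 1) :
    ‖∑ i : Fin n, ∑ j : Fin n, (if i ≤ j then a i j else 0) * y i * x j‖ ≤
      Real.logb 2 (2 * n) *
        ⨆ p : {p : (Fin n → ℂ) × (Fin n → ℂ) //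
            (∀ i, ‖p.1 i‖ ≤ 1) ∧ (∀ i, ‖p.2 i‖ ≤ 1)},
          ‖∑ i : Fin n, ∑ j : Fin n, a i j * p.1.2 i * p.1.1 j‖ := by
  rcases eq_or_ne n 0 with rfl | hn
  · simp
  have htriangle : maskLT (fun i : Fin n => (i : ℕ)) (fun j : Fin n => (j : ℕ) + 1) a =
      fun i j => if i ≤ j then a i j else 0 := by
    ext i j
    simp only [maskLT, Nat.lt_succ_iff, Fin.val_fin_le]
  have hlt : ∀ i : Fin n, (i : ℕ) + 1 < 2 ^ (Nat.log 2 n + 1) :=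
    fun i => (Nat.succ_le_of_lt i.2).trans_lt (Nat.lt_pow_succ_log_self one_lt_two n)
  have hbound := norm_pairing_maskLT_le (fun x y hx hy => norm_pairing_le_iSup a hx hy)
    (Nat.log 2 n + 1) (fun i => (Nat.lt_succ_self _).trans (hlt i)) hlt hx hy
  rw [htriangle] at hbound
  exact hbound.trans (mul_le_mul_of_nonneg_right (natLog_add_one_le_logb_two_mul hn)
    (Real.iSup_nonneg fun _ => norm_nonneg _))
end

section
/- The identity operator from ℓ₁ⁿ to ℓ_∞ⁿ has 1-summing norm equal to 1: π₁(id : ℓ₁ⁿ → ℓ_∞ⁿ) = 1. -/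
/-!
Testing the hypothesis against the unimodular `t` that aligns the phases of `⟨s, x k⟩` shows
`∑ k, ‖⟨s, x k⟩‖ ≤ 1` for every `s` in the unit ball of `ℓ_∞ⁿ`. For a sign vector `ε`,
flipping `ε j` changes `⟨ε, a⟩` by `2 ε j a j`, so averaging over all `2ⁿ` sign vectors gives
`‖a‖_∞ ≤ 𝔼 ε, ‖⟨ε, a⟩‖`; hence `∑ k, ‖x k‖_∞ ≤ 𝔼 ε, ∑ k, ‖⟨ε, x k⟩‖ ≤ 1`.
A single unit vector attains the bound.
-/

open Finset Complex
open scoped BigOperators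

theorem exists_norm_eq_one_mul_eq_norm (z : ℂ) : ∃ t : ℂ, ‖t‖ = 1 ∧ t * z = ‖z‖ := by
  refine ⟨exp (↑(-arg z) * I), norm_exp_ofReal_mul_I _, ?_⟩
  nth_rw 2 [← norm_mul_exp_arg_mul_I z]
  rw [mul_left_comm, ← exp_add, ofReal_neg, neg_mul, neg_add_cancel, exp_zero, mul_one]

theorem norm_intUnits_smul {E : Type*} [SeminormedAddCommGroup E] (u : ℤˣ) (a : E) :
    ‖u • a‖ = ‖a‖ := by
  rcases Int.units_eq_one_or u with rfl | rfl <;> simp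

variable {ι κ : Type*} [Fintype ι] [Fintype κ]

theorem sum_norm_sum_mul_le_of_forall_unimodular {x : ι → κ → ℂ} {C : ℝ}
    (h : ∀ t : ι → ℂ, (∀ k, ‖t k‖ = 1) → ∑ j, ‖∑ k, t k * x k j‖ ≤ C)
    {s : κ → ℂ} (hs : ∀ j, ‖s j‖ ≤ 1) :
    ∑ k, ‖∑ j, s j * x k j‖ ≤ C := by
  choose t ht_norm ht_mul using fun k => exists_norm_eq_one_mul_eq_norm (∑ j, s j * x k j)
  have hswap : ∑ k, t k * ∑ j, s j * x k j = ∑ j, s j * ∑ k, t k * x k j := by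
    simp only [mul_sum]
    rw [sum_comm]
    exact sum_congr rfl fun j _ => sum_congr rfl fun k _ => mul_left_comm _ _ _
  calc ∑ k, ‖∑ j, s j * x k j‖ = ‖∑ k, t k * ∑ j, s j * x k j‖ := by
        simp only [ht_mul, ← ofReal_sum, norm_real, Real.norm_eq_abs]
        exact (abs_of_nonneg (sum_nonneg fun k _ => norm_nonneg _)).symm
    _ = ‖∑ j, s j * ∑ k, t k * x k j‖ := by rw [hswap]
    _ ≤ ∑ j, ‖s j‖ * ‖∑ k, t k * x k j‖ := (norm_sum_le _ _).trans_eq (by simp only [norm_mul])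
    _ ≤ ∑ j, ‖∑ k, t k * x k j‖ :=
        sum_le_sum fun j _ => mul_le_of_le_one_left (norm_nonneg _) (hs j)
    _ ≤ C := h t ht_norm

theorem norm_le_expect_norm_sum_intUnits_smul {E : Type*} [NormedAddCommGroup E]
    [NormedSpace ℝ E] [DecidableEq κ] (a : κ → E) (j₀ : κ) :
    ‖a j₀‖ ≤ 𝔼 ε : κ → ℤˣ, ‖∑ j, ε j • a j‖ := by
  set f : (κ → ℤˣ) → ℝ := fun ε => ‖∑ j, ε j • a j‖
  let toggle : (κ → ℤˣ) → (κ → ℤˣ) := fun ε => Function.update ε j₀ (-ε j₀)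
  have htoggle : Function.Involutive toggle := fun ε => by simp [toggle]
  have hpair : ∀ ε, 2 * ‖a j₀‖ ≤ f ε + f (toggle ε) := fun ε => by
    have hdiff : ∑ j, ε j • a j - ∑ j, toggle ε j • a j = (2 : ℝ) • ε j₀ • a j₀ := by
      rw [← sum_sub_distrib, Fintype.sum_eq_single j₀ fun j hj => by simp [toggle, hj]]
      simp only [toggle, Function.update_self, Units.neg_smul, sub_neg_eq_add, two_smul]
    calc 2 * ‖a j₀‖ = ‖∑ j, ε j • a j - ∑ j, toggle ε j • a j‖ := by
          rw [hdiff, norm_smul, norm_intUnits_smul, Real.norm_two]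
      _ ≤ f ε + f (toggle ε) := norm_sub_le _ _
  have hexpect : 𝔼 ε, f (toggle ε) = 𝔼 ε, f ε :=
    Fintype.expect_equiv htoggle.toPerm _ _ fun _ => rfl
  have havg := expect_le_expect (s := univ) fun ε _ => hpair ε
  rw [expect_const univ_nonempty, expect_add_distrib, hexpect] at havg
  linarith

theorem sum_iSup_norm_le_of_forall_unimodular {x : ι → κ → ℂ} {C : ℝ}
    (h : ∀ t : ι → ℂ, (∀ k, ‖t k‖ = 1) → ∑ j, ‖∑ k, t k * x k j‖ ≤ C) :
    ∑ k, ⨆ j, ‖x k j‖ ≤ C := by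
  classical
  calc ∑ k, ⨆ j, ‖x k j‖ ≤ ∑ k, 𝔼 ε : κ → ℤˣ, ‖∑ j, ε j • x k j‖ :=
        sum_le_sum fun k _ => Real.iSup_le (norm_le_expect_norm_sum_intUnits_smul (x k))
          (expect_nonneg fun _ _ => norm_nonneg _)
    _ = 𝔼 ε : κ → ℤˣ, ∑ k, ‖∑ j, ε j • x k j‖ := (expect_sum_comm _ _ _).symm
    _ ≤ C := expect_le univ_nonempty fun ε _ => by
        simp only [Units.smul_def, zsmul_eq_mul]
        exact sum_norm_sum_mul_le_of_forall_unimodular h fun j => by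
          rcases Int.units_eq_one_or (ε j) with h | h <;> simp [h]

/-- The `1`-summing norm of the identity `ℓ₁ⁿ → ℓ_∞ⁿ` equals `1` (for `n ≥ 1`):
`π₁(id) = sup { Σ_k ‖x_k‖_∞ : sup_{|t_k|=1} ‖Σ_k t_k x_k‖₁ ≤ 1 } = 1`. -/
theorem oneSumming_id_l1_linfty (n : ℕ) (hn : 0 < n) :
    sSup { r : ℝ | ∃ (l : ℕ) (x : Fin l → (Fin n → ℂ)),
        (∀ t : Fin l → ℂ, (∀ k, ‖t k‖ = 1) →
          ∑ j : Fin n, ‖∑ k : Fin l, t k * x k j‖ ≤ 1) ∧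
        r = ∑ k : Fin l, ⨆ j : Fin n, ‖x k j‖ } = 1 := by
  refine IsGreatest.csSup_eq ⟨?_, ?_⟩
  · let j₀ : Fin n := ⟨0, hn⟩
    refine ⟨1, fun _ => Pi.single j₀ (1 : ℂ), fun t ht => ?_, ?_⟩
    · simp [Pi.single_apply, apply_ite norm, ht]
    · refine le_antisymm ?_ ?_
      · simpa using le_ciSup (Finite.bddAbove_range fun j => ‖(Pi.single j₀ 1 : Fin n → ℂ) j‖) j₀
      · simpa using Real.iSup_le (fun j => by by_cases hj : j = j₀ <;> simp [hj]) zero_le_one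
  · rintro r ⟨l, x, hx, rfl⟩
    exact sum_iSup_norm_le_of_forall_unimodular hx
end

section
/- Given that the Schur multiplier norm on ℓ_p-unit balls of each matrix T^{u,v} (indicator of i_u ≤ i_v) is at most a constant c₃ = c₃(p) for 1 ≤ p < 2, there exists a constant c₂ = c₂(p) ≥ 1 such that for every m-homogeneous polynomial P : ℂⁿ → ℂ, sup_{‖x⁽ᵏ⁾‖_p ≤ 1} |L_P(x⁽¹⁾,...,x⁽ᵐ⁾)| ≤ c₂^{m²} · sup_{‖x‖_p ≤ 1} |P(x)|, with the constant independent of the dimension n. -/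
/-- The `ℓ_p` norm of a vector in `ℂⁿ`. -/
noncomputable def pNorm (n : ℕ) (p : ℝ) (v : Fin n → ℂ) : ℝ :=
  (∑ j : Fin n, ‖v j‖ ^ p) ^ (1 / p)

/-!
Split the coefficients `c` according to the order type of the index `j`, i.e. according to which
entries of `j` lie below which. On each class, `c` is the symmetrized coefficient array times the
constant `m! / |Stab j|`, and restricting coefficients to a class is a composition of `m²`
restrictions to sets `{j | j u ≤ j v}` or their complements. By Bennett's theorem, applied to the
bilinear form in the `u`-th and `v`-th variables with the others frozen, the former have Schur
multiplier norm at most `c₃`, hence the latter at most `1 + c₃`. Finally the symmetric form is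
controlled by `P` through the polarization inequality `m! ‖L‖ ≤ m^m ‖P‖`.
-/

open Finset

section pNorm

variable {n : ℕ} {p : ℝ}

theorem pNorm_eq_norm_toLp (hp : 1 ≤ p) (v : Fin n → ℂ) :
    pNorm n p v = ‖WithLp.toLp (ENNReal.ofReal p) v‖ := by
  have hp' : (ENNReal.ofReal p).toReal = p := ENNReal.toReal_ofReal (by linarith)
  rw [PiLp.norm_eq_sum (by rw [hp']; linarith), hp']
  rfl

theorem norm_le_pNorm (hp : 1 ≤ p) (v : Fin n → ℂ) (i : Fin n) : ‖v i‖ ≤ pNorm n p v := by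
  have := Fact.mk (ENNReal.one_le_ofReal.mpr hp)
  rw [pNorm_eq_norm_toLp hp]
  exact PiLp.norm_apply_le (β := fun _ => ℂ) _ i

theorem pNorm_smul (hp : 1 ≤ p) (t : ℂ) (v : Fin n → ℂ) :
    pNorm n p (t • v) = ‖t‖ * pNorm n p v := by
  have := Fact.mk (ENNReal.one_le_ofReal.mpr hp)
  rw [pNorm_eq_norm_toLp hp, pNorm_eq_norm_toLp hp, WithLp.toLp_smul, norm_smul]

theorem pNorm_sum_le (hp : 1 ≤ p) {ι : Type*} (s : Finset ι) (f : ι → Fin n → ℂ) :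
    pNorm n p (∑ k ∈ s, f k) ≤ ∑ k ∈ s, pNorm n p (f k) := by
  have := Fact.mk (ENNReal.one_le_ofReal.mpr hp)
  simp only [pNorm_eq_norm_toLp hp, WithLp.toLp_sum]
  exact norm_sum_le _ _

theorem pNorm_sum_smul_le (hp : 1 ≤ p) {ι : Type*} (s : Finset ι) (a : ι → ℂ)
    {f : ι → Fin n → ℂ} {r : ℝ} (hf : ∀ k ∈ s, pNorm n p (f k) ≤ r) :
    pNorm n p (∑ k ∈ s, a k • f k) ≤ (∑ k ∈ s, ‖a k‖) * r := by
  rw [sum_mul]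
  refine (pNorm_sum_le hp _ _).trans (sum_le_sum fun k hk => ?_)
  rw [pNorm_smul hp]
  exact mul_le_mul_of_nonneg_left (hf k hk) (norm_nonneg _)

end pNorm

section LP

variable {n m : ℕ}

theorem LP_eq_dotProduct (c : (Fin m → Fin n) → ℂ) (x : Fin m → Fin n → ℂ) :
    LP n m c x = c ⬝ᵥ fun j => ∏ k, x k (j k) := rfl

theorem LP_sub (c d : (Fin m → Fin n) → ℂ) (x : Fin m → Fin n → ℂ) :
    LP n m (c - d) x = LP n m c x - LP n m d x := by
  simp only [LP_eq_dotProduct, sub_dotProduct]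

theorem LP_smul (a : ℂ) (c : (Fin m → Fin n) → ℂ) (x : Fin m → Fin n → ℂ) :
    LP n m (a • c) x = a * LP n m c x := by
  simp only [LP_eq_dotProduct, smul_dotProduct, smul_eq_mul]

theorem LP_sum {ι : Type*} (s : Finset ι) (c : ι → (Fin m → Fin n) → ℂ)
    (x : Fin m → Fin n → ℂ) : LP n m (∑ i ∈ s, c i) x = ∑ i ∈ s, LP n m (c i) x := by
  simp only [LP_eq_dotProduct, sum_dotProduct]

theorem LP_smul_right (c : (Fin m → Fin n) → ℂ) (t : ℂ) (x : Fin m → Fin n → ℂ) :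
    LP n m c (fun k => t • x k) = t ^ m * LP n m c x := by
  simp only [LP, Pi.smul_apply, smul_eq_mul, prod_mul_distrib, prod_const, card_univ,
    Fintype.card_fin, mul_sum]
  exact sum_congr rfl fun j _ => by ring

theorem norm_LP_le_sum_norm {c : (Fin m → Fin n) → ℂ} {x : Fin m → Fin n → ℂ}
    (hx : ∀ k i, ‖x k i‖ ≤ 1) : ‖LP n m c x‖ ≤ ∑ j, ‖c j‖ := by
  refine (norm_sum_le _ _).trans (sum_le_sum fun j _ => ?_)
  rw [norm_mul, norm_prod]
  exact mul_le_of_le_one_right (norm_nonneg _)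
    (prod_le_one (fun _ _ => norm_nonneg _) fun k _ => hx k _)

end LP

section Norms

variable {p : ℝ} {n m : ℕ}

noncomputable def multilinNorm (p : ℝ) (n m : ℕ) (c : (Fin m → Fin n) → ℂ) : ℝ :=
  ⨆ x : {x : Fin m → Fin n → ℂ // ∀ k, pNorm n p (x k) ≤ 1}, ‖LP n m c x.1‖

noncomputable def polyNorm (p : ℝ) (n m : ℕ) (c : (Fin m → Fin n) → ℂ) : ℝ :=
  ⨆ y : {y : Fin n → ℂ // pNorm n p y ≤ 1}, ‖LP n m c (fun _ => y.1)‖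

theorem multilinNorm_nonneg (c : (Fin m → Fin n) → ℂ) : 0 ≤ multilinNorm p n m c :=
  Real.iSup_nonneg fun _ => norm_nonneg _

theorem norm_LP_le_multilinNorm (hp : 1 ≤ p) {c : (Fin m → Fin n) → ℂ}
    {x : Fin m → Fin n → ℂ} (hx : ∀ k, pNorm n p (x k) ≤ 1) :
    ‖LP n m c x‖ ≤ multilinNorm p n m c := by
  refine le_ciSup (f := fun x : {x : Fin m → Fin n → ℂ // ∀ k, pNorm n p (x k) ≤ 1} =>
    ‖LP n m c x.1‖) ⟨∑ j, ‖c j‖, ?_⟩ ⟨x, hx⟩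
  rintro _ ⟨x, rfl⟩
  exact norm_LP_le_sum_norm fun k i => (norm_le_pNorm hp _ i).trans (x.2 k)

theorem multilinNorm_le {c : (Fin m → Fin n) → ℂ} {a : ℝ}
    (h : ∀ x : Fin m → Fin n → ℂ, (∀ k, pNorm n p (x k) ≤ 1) → ‖LP n m c x‖ ≤ a)
    (ha : 0 ≤ a) : multilinNorm p n m c ≤ a :=
  Real.iSup_le (fun x => h x.1 x.2) ha

theorem polyNorm_nonneg (c : (Fin m → Fin n) → ℂ) : 0 ≤ polyNorm p n m c :=
  Real.iSup_nonneg fun _ => norm_nonneg _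

theorem norm_LP_le_polyNorm (hp : 1 ≤ p) {c : (Fin m → Fin n) → ℂ} {y : Fin n → ℂ}
    (hy : pNorm n p y ≤ 1) : ‖LP n m c (fun _ => y)‖ ≤ polyNorm p n m c := by
  refine le_ciSup (f := fun y : {y : Fin n → ℂ // pNorm n p y ≤ 1} =>
    ‖LP n m c (fun _ => y.1)‖) ⟨∑ j, ‖c j‖, ?_⟩ ⟨y, hy⟩
  rintro _ ⟨y, rfl⟩
  exact norm_LP_le_sum_norm fun _ i => (norm_le_pNorm hp _ i).trans y.2

end Norms

def SchurBound (p : ℝ) (n m : ℕ) (s : Set (Fin m → Fin n)) (K : ℝ) : Prop :=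
  ∀ c, multilinNorm p n m (s.indicator c) ≤ K * multilinNorm p n m c

namespace SchurBound

variable {p : ℝ} {n m : ℕ} {s t : Set (Fin m → Fin n)} {K L : ℝ}

theorem univ : SchurBound p n m Set.univ 1 := fun c => by
  rw [Set.indicator_univ, one_mul]

theorem mono (h : SchurBound p n m s K) (hKL : K ≤ L) : SchurBound p n m s L := fun c =>
  (h c).trans (mul_le_mul_of_nonneg_right hKL (multilinNorm_nonneg c))

theorem compl (hp : 1 ≤ p) (h : SchurBound p n m s K) : SchurBound p n m sᶜ (1 + K) := by
  intro c
  rw [add_mul, one_mul]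
  refine multilinNorm_le (fun x hx => ?_) ?_
  · rw [Set.indicator_compl, LP_sub]
    exact (norm_sub_le _ _).trans (add_le_add (norm_LP_le_multilinNorm hp hx)
      ((norm_LP_le_multilinNorm hp hx).trans (h c)))
  · exact add_nonneg (multilinNorm_nonneg c) ((multilinNorm_nonneg _).trans (h c))

theorem inter (h : SchurBound p n m s K) (h' : SchurBound p n m t L) (hK : 0 ≤ K) :
    SchurBound p n m (s ∩ t) (K * L) := fun c => by
  rw [← Set.indicator_indicator, mul_assoc]
  exact (h _).trans (mul_le_mul_of_nonneg_left (h' c) hK)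

theorem iInter {ι : Type*} [Fintype ι] {s : ι → Set (Fin m → Fin n)}
    (h : ∀ i, SchurBound p n m (s i) K) (hK : 0 ≤ K) :
    SchurBound p n m (⋂ i, s i) (K ^ Fintype.card ι) := by
  classical
  suffices ∀ I : Finset ι, SchurBound p n m (⋂ i ∈ I, s i) (K ^ I.card) by
    simpa using this Finset.univ
  intro I
  induction I using Finset.induction_on with
  | empty => simpa using univ
  | insert a I ha ih =>
    rw [Finset.set_biInter_insert, Finset.card_insert_of_notMem ha, pow_succ']
    exact (h a).inter ih hK

end SchurBound

def TriangleProjectionBound (p : ℝ) (n : ℕ) (C : ℝ) : Prop :=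
  ∀ (a : Fin n → Fin n → ℂ) (x y : Fin n → ℂ), pNorm n p x ≤ 1 → pNorm n p y ≤ 1 →
    ‖∑ i : Fin n, ∑ j : Fin n, (if i ≤ j then a i j else 0) * y i * x j‖ ≤
      C * ⨆ q : {q : (Fin n → ℂ) × (Fin n → ℂ) // pNorm n p q.1 ≤ 1 ∧ pNorm n p q.2 ≤ 1},
        ‖∑ i : Fin n, ∑ j : Fin n, a i j * q.1.2 i * q.1.1 j‖

section Slice

variable {p : ℝ} {n m : ℕ}

def sliceMatrix (c : (Fin m → Fin n) → ℂ) (x : Fin m → Fin n → ℂ) (u v : Fin m) (i k : Fin n) : ℂ :=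
  ∑ j with (j u, j v) = (i, k), c j * ∏ w ∈ ({u, v} : Finset (Fin m))ᶜ, x w (j w)

theorem LP_update_update {u v : Fin m} (huv : u ≠ v) (c : (Fin m → Fin n) → ℂ)
    (x : Fin m → Fin n → ℂ) (y z : Fin n → ℂ) :
    LP n m c (Function.update (Function.update x u y) v z) =
      ∑ i, ∑ k, sliceMatrix c x u v i k * y i * z k := by
  set T : (Fin m → Fin n) → ℂ := fun j => c j * ∏ w ∈ ({u, v} : Finset (Fin m))ᶜ, x w (j w)
  have hprod : ∀ j : Fin m → Fin n,
      c j * ∏ w, Function.update (Function.update x u y) v z w (j w) = T j * y (j u) * z (j v) := by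
    intro j
    rw [← prod_mul_prod_compl {u, v}, prod_pair huv]
    have hcompl : ∀ w ∈ ({u, v} : Finset (Fin m))ᶜ,
        Function.update (Function.update x u y) v z w (j w) = x w (j w) := by
      intro w hw
      simp only [mem_compl, mem_insert, mem_singleton, not_or] at hw
      rw [Function.update_of_ne hw.2, Function.update_of_ne hw.1]
    rw [Function.update_of_ne huv, Function.update_self, Function.update_self,
      prod_congr rfl hcompl]
    ring
  calc LP n m c (Function.update (Function.update x u y) v z)
      = ∑ j, T j * y (j u) * z (j v) := sum_congr rfl fun j _ => hprod j
    _ = ∑ ik : Fin n × Fin n, ∑ j with (j u, j v) = ik, T j * y (j u) * z (j v) :=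
      (sum_fiberwise _ _ _).symm
    _ = ∑ i, ∑ k, sliceMatrix c x u v i k * y i * z k := by
      rw [Fintype.sum_prod_type]
      refine sum_congr rfl fun i _ => sum_congr rfl fun k _ => ?_
      rw [sliceMatrix, sum_mul, sum_mul]
      refine sum_congr rfl fun j hj => ?_
      obtain ⟨hju, hjv⟩ := Prod.mk.inj (mem_filter.mp hj).2
      rw [hju, hjv]

theorem sliceMatrix_indicator_setOf_le (c : (Fin m → Fin n) → ℂ) (x : Fin m → Fin n → ℂ)
    (u v : Fin m) (i k : Fin n) :
    sliceMatrix ({j | j u ≤ j v}.indicator c) x u v i k =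
      if i ≤ k then sliceMatrix c x u v i k else 0 := by
  have hfib : ∀ j ∈ ({j | (j u, j v) = (i, k)} : Finset (Fin m → Fin n)), j u = i ∧ j v = k :=
    fun j hj => Prod.mk.inj (mem_filter.mp hj).2
  split_ifs with hik
  · refine sum_congr rfl fun j hj => ?_
    rw [Set.indicator_of_mem (by simpa [(hfib j hj).1, (hfib j hj).2] using hik)]
  · refine sum_eq_zero fun j hj => ?_
    rw [Set.indicator_of_notMem (by simpa [(hfib j hj).1, (hfib j hj).2] using hik), zero_mul]

theorem TriangleProjectionBound.schurBound_setOf_le {C : ℝ} (hp : 1 ≤ p)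
    (hC : TriangleProjectionBound p n C) (u v : Fin m) :
    SchurBound p n m {j | j u ≤ j v} (max C 1) := by
  rcases eq_or_ne u v with rfl | huv
  · simpa using SchurBound.univ.mono (le_max_right C 1)
  intro c
  have hK : 0 ≤ max C 1 := zero_le_one.trans (le_max_right C 1)
  refine multilinNorm_le (fun x hx => ?_) (mul_nonneg hK (multilinNorm_nonneg c))
  have hsup : (⨆ q : {q : (Fin n → ℂ) × (Fin n → ℂ) // pNorm n p q.1 ≤ 1 ∧ pNorm n p q.2 ≤ 1},
      ‖∑ i, ∑ k, sliceMatrix c x u v i k * q.1.2 i * q.1.1 k‖) ≤ multilinNorm p n m c := by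
    refine Real.iSup_le (fun q => ?_) (multilinNorm_nonneg c)
    rw [← LP_update_update huv]
    refine norm_LP_le_multilinNorm hp fun w => ?_
    rcases eq_or_ne w v with rfl | hwv
    · simpa using q.2.1
    rcases eq_or_ne w u with rfl | hwu
    · simpa [Function.update_of_ne hwv] using q.2.2
    · simpa [Function.update_of_ne hwv, Function.update_of_ne hwu] using hx w
  calc ‖LP n m ({j | j u ≤ j v}.indicator c) x‖
      = ‖∑ i, ∑ k, (if i ≤ k then sliceMatrix c x u v i k else 0) * x u i * x v k‖ := by
        conv_lhs => rw [← Function.update_eq_self u x, ← Function.update_eq_self v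
          (Function.update x u (x u)), LP_update_update huv]
        simp only [sliceMatrix_indicator_setOf_le, Function.update_eq_self]
    _ ≤ C * ⨆ q : {q : (Fin n → ℂ) × (Fin n → ℂ) // pNorm n p q.1 ≤ 1 ∧ pNorm n p q.2 ≤ 1},
          ‖∑ i, ∑ k, sliceMatrix c x u v i k * q.1.2 i * q.1.1 k‖ := hC _ _ _ (hx v) (hx u)
    _ ≤ max C 1 * multilinNorm p n m c :=
        mul_le_mul (le_max_left C 1) hsup (Real.iSup_nonneg fun _ => norm_nonneg _) hK

end Slice

section OrderPattern

def orderPattern {ι α : Type*} [LinearOrder α] (j : ι → α) : ι → ι → Bool :=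
  fun u v => decide (j u ≤ j v)

theorem setOf_orderPattern_eq {ι α : Type*} [LinearOrder α] (π : ι → ι → Bool) :
    {j : ι → α | orderPattern j = π} = ⋂ e : ι × ι, {j | decide (j e.1 ≤ j e.2) = π e.1 e.2} := by
  ext j
  simp [orderPattern, funext_iff]

variable {p : ℝ} {n m : ℕ}

theorem schurBound_setOf_orderPattern_eq (hp : 1 ≤ p) {K : ℝ}
    (hK : ∀ u v : Fin m, SchurBound p n m {j | j u ≤ j v} K) (hK0 : 0 ≤ K)
    (π : Fin m → Fin m → Bool) :
    SchurBound p n m {j | orderPattern j = π} ((1 + K) ^ (m ^ 2)) := by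
  have hcard : m ^ 2 = Fintype.card (Fin m × Fin m) := by simp [sq]
  rw [setOf_orderPattern_eq, hcard]
  refine SchurBound.iInter (fun e => ?_) (by linarith)
  cases π e.1 e.2
  · simpa [Set.compl_ofPred] using (hK e.1 e.2).compl hp
  · simpa using (hK e.1 e.2).mono (by linarith)

theorem norm_LP_le_of_eq_mul_orderPattern (hp : 1 ≤ p) {K : ℝ}
    (hK : ∀ u v : Fin m, SchurBound p n m {j | j u ≤ j v} K) (hK0 : 0 ≤ K)
    {g : (Fin m → Fin m → Bool) → ℂ} {M : ℝ} (hg : ∀ π, ‖g π‖ ≤ M)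
    {c A : (Fin m → Fin n) → ℂ} (hc : ∀ j, c j = g (orderPattern j) * A j)
    {x : Fin m → Fin n → ℂ} (hx : ∀ k, pNorm n p (x k) ≤ 1) :
    ‖LP n m c x‖ ≤ 2 ^ (m ^ 2) * (M * ((1 + K) ^ (m ^ 2) * multilinNorm p n m A)) := by
  have hdecomp : c = ∑ π, g π • {j | orderPattern j = π}.indicator A := by
    ext j
    simp [hc, Set.indicator_apply]
  rw [hdecomp, LP_sum]
  calc ‖∑ π, LP n m (g π • {j | orderPattern j = π}.indicator A) x‖
      ≤ ∑ π, ‖g π‖ * ‖LP n m ({j | orderPattern j = π}.indicator A) x‖ := by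
        simp only [LP_smul, ← norm_mul]
        exact norm_sum_le _ _
    _ ≤ ∑ _π : Fin m → Fin m → Bool, M * ((1 + K) ^ (m ^ 2) * multilinNorm p n m A) :=
        sum_le_sum fun π _ => mul_le_mul (hg π) ((norm_LP_le_multilinNorm hp hx).trans
          (schurBound_setOf_orderPattern_eq hp hK hK0 π A)) (norm_nonneg _)
          ((norm_nonneg _).trans (hg π))
    _ = 2 ^ (m ^ 2) * (M * ((1 + K) ^ (m ^ 2) * multilinNorm p n m A)) := by
        simp [← pow_mul, sq]

end OrderPattern

section Symmetrize

open Nat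

variable {m : ℕ} {α : Type*}

noncomputable def symmetrize (c : (Fin m → α) → ℂ) (j : Fin m → α) : ℂ :=
  (m ! : ℂ)⁻¹ * ∑ σ : Equiv.Perm (Fin m), c (j ∘ σ)

theorem symmetrize_comp_perm (c : (Fin m → α) → ℂ) (τ : Equiv.Perm (Fin m)) (j : Fin m → α) :
    symmetrize c (j ∘ τ) = symmetrize c j := by
  rw [symmetrize, symmetrize, ← Equiv.sum_comp (Equiv.mulLeft τ) fun σ => c (j ∘ σ)]
  rfl

theorem symmetrize_of_monotone [PartialOrder α] [DecidableEq α] {c : (Fin m → α) → ℂ}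
    (hc : ∀ j, ¬ Monotone j → c j = 0) {j : Fin m → α} (hj : Monotone j) :
    symmetrize c j = (m ! : ℂ)⁻¹ * (#{σ : Equiv.Perm (Fin m) | j ∘ σ = j} * c j) := by
  have hterm : ∀ σ : Equiv.Perm (Fin m), c (j ∘ σ) = if j ∘ σ = j then c j else 0 := by
    intro σ
    split_ifs with hσ
    · rw [hσ]
    · refine hc _ fun hjσ => hσ ?_
      simpa using Tuple.unique_monotone (σ := σ) (τ := 1) hjσ hj
  rw [symmetrize, sum_congr rfl fun σ _ => hterm σ, sum_ite, sum_const_zero, add_zero,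
    sum_const, nsmul_eq_mul]

/-- Read on the order type `π` of an index `j`: the condition says that `j` is nondecreasing,
and the permutations counted form the stabilizer of `j`. -/
noncomputable def patternWeight (π : Fin m → Fin m → Bool) : ℂ :=
  if ∀ u v, u ≤ v → π u v then
    (m ! : ℂ) / #{σ : Equiv.Perm (Fin m) | ∀ u, π (σ u) u ∧ π u (σ u)}
  else 0

theorem norm_patternWeight_le (π : Fin m → Fin m → Bool) : ‖patternWeight π‖ ≤ m ! := by
  unfold patternWeight
  split_ifs with hπ
  · rw [norm_div, Complex.norm_natCast, Complex.norm_natCast]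
    refine div_le_self (Nat.cast_nonneg _) (Nat.one_le_cast.mpr (card_pos.mpr ⟨1, ?_⟩))
    simpa using fun u => hπ u u le_rfl
  · simp

theorem eq_patternWeight_mul_symmetrize [LinearOrder α] {c : (Fin m → α) → ℂ}
    (hc : ∀ j, ¬ Monotone j → c j = 0) (j : Fin m → α) :
    c j = patternWeight (orderPattern j) * symmetrize c j := by
  have hmono : (∀ u v, u ≤ v → orderPattern j u v) ↔ Monotone j := by
    simp [orderPattern, Monotone]
  by_cases hj : Monotone j
  · have hstab : #{σ : Equiv.Perm (Fin m) | ∀ u, orderPattern j (σ u) u ∧ orderPattern j u (σ u)}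
        = #{σ : Equiv.Perm (Fin m) | j ∘ σ = j} := by
      congr 1
      exact filter_congr fun σ _ => by simp [orderPattern, funext_iff, ← le_antisymm_iff]
    have hcard : (#{σ : Equiv.Perm (Fin m) | j ∘ σ = j} : ℂ) ≠ 0 :=
      Nat.cast_ne_zero.mpr (card_pos.mpr ⟨1, by simp⟩).ne'
    have hfact : (m ! : ℂ) ≠ 0 := Nat.cast_ne_zero.mpr (factorial_ne_zero m)
    rw [symmetrize_of_monotone hc hj, patternWeight, if_pos (hmono.mpr hj), hstab]
    field_simp
  · rw [hc j hj, patternWeight, if_neg (mt hmono.mp hj), zero_mul]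

end Symmetrize

section Polarization

open Nat

variable {p : ℝ} {n m : ℕ}

theorem LP_comp_perm (c : (Fin m → Fin n) → ℂ) (σ : Equiv.Perm (Fin m)) (x : Fin m → Fin n → ℂ) :
    LP n m (fun j => c (j ∘ σ)) x = LP n m c (x ∘ σ) := by
  refine Fintype.sum_equiv (Equiv.arrowCongr σ.symm (Equiv.refl (Fin n))) _ _ fun j => ?_
  simp only [Equiv.arrowCongr_apply, Equiv.symm_symm, Equiv.coe_refl, Function.comp_apply, id]
  rw [Equiv.prod_comp σ fun w => x w (j w)]
  rfl

theorem LP_symmetrize_diag (c : (Fin m → Fin n) → ℂ) (y : Fin n → ℂ) :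
    LP n m (symmetrize c) (fun _ => y) = LP n m c (fun _ => y) := by
  have h : symmetrize c = (m ! : ℂ)⁻¹ • ∑ σ : Equiv.Perm (Fin m), fun j => c (j ∘ σ) := by
    ext j
    simp [symmetrize, Finset.sum_apply]
  have hfact : (m ! : ℂ) ≠ 0 := Nat.cast_ne_zero.mpr (factorial_ne_zero m)
  have hconst : ∀ σ : Equiv.Perm (Fin m), (fun _ : Fin m => y) ∘ σ = fun _ => y := fun _ => rfl
  simp only [h, LP_smul, LP_sum, LP_comp_perm, hconst, sum_const, nsmul_eq_mul]
  rw [Finset.card_univ, Fintype.card_perm, Fintype.card_fin]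
  field_simp

theorem LP_comp_perm_of_symmetric {A : (Fin m → Fin n) → ℂ}
    (hA : ∀ (σ : Equiv.Perm (Fin m)) j, A (j ∘ σ) = A j) (σ : Equiv.Perm (Fin m))
    (x : Fin m → Fin n → ℂ) : LP n m A (x ∘ σ) = LP n m A x := by
  simp only [← LP_comp_perm, hA]

theorem LP_diag_sum_smul (c : (Fin m → Fin n) → ℂ) (s : Fin m → ℂ) (x : Fin m → Fin n → ℂ) :
    LP n m c (fun _ => ∑ k, s k • x k) =
      ∑ f : Fin m → Fin m, (∏ u, s (f u)) * LP n m c (x ∘ f) := by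
  simp only [LP, Finset.sum_apply, Pi.smul_apply, smul_eq_mul, Fintype.prod_sum,
    prod_mul_distrib, mul_sum, Function.comp_apply]
  rw [sum_comm]
  exact sum_congr rfl fun _ _ => sum_congr rfl fun _ _ => by ring

theorem sum_signs_prod_mul_prod_comp (f : Fin m → Fin m) :
    ∑ s ∈ Fintype.piFinset fun _ : Fin m => ({1, -1} : Finset ℂ), (∏ k, s k) * ∏ u, s (f u) =
      if f.Surjective then 2 ^ m else 0 := by
  have hfib : ∀ s : Fin m → ℂ, (∏ k, s k) * ∏ u, s (f u) = ∏ k, s k ^ (#{u | f u = k} + 1) := by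
    intro s
    rw [← prod_fiberwise' univ f s, ← prod_mul_distrib]
    exact prod_congr rfl fun k _ => by rw [prod_const]; ring
  have hsign : ∀ d : ℕ, ∑ z ∈ ({1, -1} : Finset ℂ), z ^ (d + 1) = 1 + (-1) ^ (d + 1) := fun d => by
    rw [sum_pair (by norm_num), one_pow]
  rw [sum_congr rfl fun s _ => hfib s,
    ← prod_univ_sum (fun _ => {1, -1}) fun k z => z ^ (#{u | f u = k} + 1),
    prod_congr rfl fun k _ => hsign _]
  split_ifs with hf
  · have hcard : ∀ k, #{u | f u = k} = 1 := fun k => by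
      obtain ⟨u, hu, huniq⟩ := (Finite.surjective_iff_bijective.mp hf).existsUnique k
      exact card_eq_one.mpr ⟨u, by ext w; simpa using ⟨fun h => huniq w h, fun h => h ▸ hu⟩⟩
    simp only [hcard]
    norm_num
  · obtain ⟨k, hk⟩ := not_forall.mp hf
    refine prod_eq_zero (mem_univ k) ?_
    rw [card_eq_zero.mpr (filter_eq_empty_iff.mpr fun u _ => fun h => hk ⟨u, h⟩)]
    norm_num

theorem sum_ite_surjective {α M : Type*} [Fintype α] [DecidableEq α] [AddCommMonoid M]
    (g : (α → α) → M) :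
    ∑ f : α → α, (if f.Surjective then g f else 0) = ∑ σ : Equiv.Perm α, g σ := by
  rw [← sum_filter]
  symm
  refine sum_bij (fun σ _ => ⇑σ) (fun σ _ => by simpa using σ.surjective)
    (fun σ _ τ _ h => DFunLike.coe_injective h) (fun f hf => ?_) (fun σ _ => rfl)
  exact ⟨Equiv.ofBijective f (Finite.surjective_iff_bijective.mp (mem_filter.mp hf).2),
    mem_univ _, rfl⟩

theorem polarization_identity {A : (Fin m → Fin n) → ℂ}
    (hA : ∀ (σ : Equiv.Perm (Fin m)) j, A (j ∘ σ) = A j) (x : Fin m → Fin n → ℂ) :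
    ∑ s ∈ Fintype.piFinset fun _ : Fin m => ({1, -1} : Finset ℂ),
        (∏ k, s k) * LP n m A (fun _ => ∑ k, s k • x k) = 2 ^ m * m ! * LP n m A x := by
  calc ∑ s ∈ Fintype.piFinset fun _ : Fin m => ({1, -1} : Finset ℂ),
        (∏ k, s k) * LP n m A (fun _ => ∑ k, s k • x k)
      = ∑ f : Fin m → Fin m, (∑ s ∈ Fintype.piFinset fun _ : Fin m => ({1, -1} : Finset ℂ),
          (∏ k, s k) * ∏ u, s (f u)) * LP n m A (x ∘ f) := by
        simp only [LP_diag_sum_smul, mul_sum, sum_mul, mul_assoc]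
        exact sum_comm
    _ = ∑ f : Fin m → Fin m, if f.Surjective then 2 ^ m * LP n m A (x ∘ f) else 0 := by
        simp only [sum_signs_prod_mul_prod_comp, ite_mul, zero_mul]
    _ = 2 ^ m * m ! * LP n m A x := by
        rw [sum_ite_surjective fun f => 2 ^ m * LP n m A (x ∘ f)]
        simp only [LP_comp_perm_of_symmetric hA, sum_const, nsmul_eq_mul]
        rw [Finset.card_univ, Fintype.card_perm, Fintype.card_fin]
        ring

theorem factorial_mul_norm_LP_le (hp : 1 ≤ p) {A : (Fin m → Fin n) → ℂ}
    (hA : ∀ (σ : Equiv.Perm (Fin m)) j, A (j ∘ σ) = A j) {x : Fin m → Fin n → ℂ}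
    (hx : ∀ k, pNorm n p (x k) ≤ 1) :
    m ! * ‖LP n m A x‖ ≤ m ^ m * polyNorm p n m A := by
  set signs := Fintype.piFinset fun _ : Fin m => ({1, -1} : Finset ℂ)
  have hsigns : ∀ s ∈ signs, ∀ k, ‖s k‖ = 1 := fun s hs k => by
    rcases mem_insert.mp (Fintype.mem_piFinset.mp hs k) with h | h <;> simp_all
  -- Polarize at `x / m`, so that every `∑ k, s k • x k / m` lies in the unit ball.
  set x' : Fin m → Fin n → ℂ := fun k => (m : ℂ)⁻¹ • x k
  have hx' : ∀ k ∈ univ, pNorm n p (x' k) ≤ (m : ℝ)⁻¹ := fun k _ => by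
    rw [pNorm_smul hp, norm_inv, Complex.norm_natCast]
    exact mul_le_of_le_one_right (by positivity) (hx k)
  have hball : ∀ s ∈ signs, pNorm n p (∑ k, s k • x' k) ≤ 1 := fun s hs => by
    refine (pNorm_sum_smul_le hp _ s hx').trans ?_
    simpa [hsigns s hs] using mul_inv_le_one
  have hpolar : ‖(2 : ℂ) ^ m * m ! * LP n m A x'‖ ≤ 2 ^ m * polyNorm p n m A := by
    rw [← polarization_identity hA x']
    calc ‖∑ s ∈ signs, (∏ k, s k) * LP n m A (fun _ => ∑ k, s k • x' k)‖
        ≤ ∑ s ∈ signs, ‖(∏ k, s k) * LP n m A (fun _ => ∑ k, s k • x' k)‖ := norm_sum_le _ _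
      _ ≤ ∑ _s ∈ signs, polyNorm p n m A := sum_le_sum fun s hs => by
          rw [norm_mul, norm_prod, prod_eq_one fun k _ => hsigns s hs k, one_mul]
          exact norm_LP_le_polyNorm hp (hball s hs)
      _ = 2 ^ m * polyNorm p n m A := by
          rw [sum_const, nsmul_eq_mul, Fintype.card_piFinset, prod_const,
            card_pair (by norm_num), Finset.card_univ, Fintype.card_fin]
          norm_num
  have hm : (m : ℝ) ^ m * (m : ℝ)⁻¹ ^ m = 1 := by
    rcases Nat.eq_zero_or_pos m with rfl | hm
    · simp
    · rw [← mul_pow, mul_inv_cancel₀ (by positivity), one_pow]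
  rw [LP_smul_right, norm_mul, norm_mul, norm_mul, norm_pow, norm_pow, norm_inv,
    Complex.norm_natCast, Complex.norm_natCast, Complex.norm_ofNat] at hpolar
  rw [mul_assoc] at hpolar
  calc (m ! : ℝ) * ‖LP n m A x‖ = m ^ m * (m ! * ((m : ℝ)⁻¹ ^ m * ‖LP n m A x‖)) := by
        rw [mul_left_comm, ← mul_assoc (_ ^ m), hm, one_mul]
    _ ≤ m ^ m * polyNorm p n m A := by gcongr; exact le_of_mul_le_mul_left hpolar (by positivity)

theorem factorial_mul_multilinNorm_le (hp : 1 ≤ p) {A : (Fin m → Fin n) → ℂ}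
    (hA : ∀ (σ : Equiv.Perm (Fin m)) j, A (j ∘ σ) = A j) :
    m ! * multilinNorm p n m A ≤ m ^ m * polyNorm p n m A := by
  have hfact : (0 : ℝ) < m ! := by positivity
  rw [← le_div_iff₀' hfact]
  refine multilinNorm_le (fun x hx => ?_) (by have := polyNorm_nonneg (p := p) A; positivity)
  rw [le_div_iff₀' hfact]
  exact factorial_mul_norm_LP_le hp hA hx

theorem polyNorm_symmetrize (c : (Fin m → Fin n) → ℂ) :
    polyNorm p n m (symmetrize c) = polyNorm p n m c := by
  simp only [polyNorm, LP_symmetrize_diag]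

end Polarization

theorem main_theorem_lp_general (p : ℝ) (hp1 : 1 ≤ p) (c₃ : ℝ)
    (hBennett : ∀ (n : ℕ) (a : Fin n → Fin n → ℂ) (x y : Fin n → ℂ),
      pNorm n p x ≤ 1 → pNorm n p y ≤ 1 →
      ‖∑ i : Fin n, ∑ j : Fin n, (if i ≤ j then a i j else 0) * y i * x j‖ ≤
        c₃ * ⨆ q : {q : (Fin n → ℂ) × (Fin n → ℂ) //
            pNorm n p q.1 ≤ 1 ∧ pNorm n p q.2 ≤ 1},
          ‖∑ i : Fin n, ∑ j : Fin n, a i j * q.1.2 i * q.1.1 j‖) :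
    ∃ c₂ : ℝ, 1 ≤ c₂ ∧
      ∀ (n m : ℕ) (cf : (Fin m → Fin n) → ℂ),
        (∀ j : Fin m → Fin n, ¬ Monotone j → cf j = 0) →
        ∀ x : Fin m → (Fin n → ℂ), (∀ u, pNorm n p (x u) ≤ 1) →
          ‖LP n m cf x‖ ≤
            c₂ ^ (m ^ 2) *
              ⨆ y : {y : Fin n → ℂ // pNorm n p y ≤ 1},
                ‖LP n m cf (fun _ => y.1)‖ := by
  set K := max c₃ 1
  have hK0 : 0 ≤ K := zero_le_one.trans (le_max_right c₃ 1)
  refine ⟨4 * (1 + K), by linarith, fun n m cf hcf x hx => ?_⟩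
  have hK : ∀ u v : Fin m, SchurBound p n m {j | j u ≤ j v} K :=
    TriangleProjectionBound.schurBound_setOf_le hp1 (hBennett n)
  have hm : (m : ℝ) ^ m ≤ 2 ^ (m ^ 2) := calc
    (m : ℝ) ^ m ≤ (2 ^ m) ^ m := by gcongr; exact_mod_cast Nat.lt_two_pow_self.le
    _ = 2 ^ (m ^ 2) := by rw [← pow_mul, sq]
  calc ‖LP n m cf x‖
      ≤ 2 ^ (m ^ 2) * (m.factorial * ((1 + K) ^ (m ^ 2) * multilinNorm p n m (symmetrize cf))) :=
        norm_LP_le_of_eq_mul_orderPattern hp1 hK hK0 norm_patternWeight_le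
          (eq_patternWeight_mul_symmetrize hcf) hx
    _ = 2 ^ (m ^ 2) * (1 + K) ^ (m ^ 2) * (m.factorial * multilinNorm p n m (symmetrize cf)) := by
        ring
    _ ≤ 2 ^ (m ^ 2) * (1 + K) ^ (m ^ 2) * (m ^ m * polyNorm p n m cf) := by
        rw [← polyNorm_symmetrize]
        exact mul_le_mul_of_nonneg_left
          (factorial_mul_multilinNorm_le hp1 (symmetrize_comp_perm cf)) (by positivity)
    _ ≤ 2 ^ (m ^ 2) * (1 + K) ^ (m ^ 2) * (2 ^ (m ^ 2) * polyNorm p n m cf) := by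
        have := polyNorm_nonneg (p := p) cf
        gcongr
    _ = (4 * (1 + K)) ^ (m ^ 2) * polyNorm p n m cf := by
        rw [mul_pow, show (4 : ℝ) = 2 * 2 by norm_num, mul_pow]
        ring

/-- Given Bennett's theorem — the main triangle projection is a bounded Schur
multiplier on bilinear forms on `ℓ_pⁿ × ℓ_pⁿ`, uniformly in `n`, for `1 ≤ p < 2`,
with constant `c₃ = c₃(p)` — there is a constant `c₂ = c₂(p) ≥ 1` such that for
every `m`-homogeneous polynomial `P` on `ℂⁿ`,
`sup_{‖x⁽ᵏ⁾‖_p≤1} |L_P(x⁽¹⁾,…,x⁽ᵐ⁾)| ≤ c₂^{m²} · sup_{‖x‖_p≤1} |P(x)|`,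
independently of the dimension `n`. -/
theorem main_theorem_lp (p : ℝ) (hp1 : 1 ≤ p) (hp2 : p < 2) (c₃ : ℝ)
    (hBennett : ∀ (n : ℕ) (a : Fin n → Fin n → ℂ) (x y : Fin n → ℂ),
      pNorm n p x ≤ 1 → pNorm n p y ≤ 1 →
      ‖∑ i : Fin n, ∑ j : Fin n, (if i ≤ j then a i j else 0) * y i * x j‖ ≤
        c₃ * ⨆ q : {q : (Fin n → ℂ) × (Fin n → ℂ) //
            pNorm n p q.1 ≤ 1 ∧ pNorm n p q.2 ≤ 1},
          ‖∑ i : Fin n, ∑ j : Fin n, a i j * q.1.2 i * q.1.1 j‖) :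
    ∃ c₂ : ℝ, 1 ≤ c₂ ∧
      ∀ (n m : ℕ) (cf : (Fin m → Fin n) → ℂ),
        (∀ j : Fin m → Fin n, ¬ Monotone j → cf j = 0) →
        ∀ x : Fin m → (Fin n → ℂ), (∀ u, pNorm n p (x u) ≤ 1) →
          ‖LP n m cf x‖ ≤
            c₂ ^ (m ^ 2) *
              ⨆ y : {y : Fin n → ℂ // pNorm n p y ≤ 1},
                ‖LP n m cf (fun _ => y.1)‖ :=
  main_theorem_lp_general p hp1 c₃ hBennett
end
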